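/- arXiv:2308.01211 — 8 statements merged into one kernel-verified Lean document; each statement's English description precedes it below -/
import Mathlib

section
/- Let B and C be two symmetric positive semi-definite n×n real matrices. Then tr(BC) ≥ n·(det B)^{1/n}·(det C)^{1/n}. In particular, tr(BC) ≥ 0. -/
open Matrix

lemma trace_eq_sum_eigs {n : ℕ} {A : Matrix (Fin n) (Fin n) ℝ}
    (hA : A.IsHermitian) : A.trace = ∑ i, hA.eigenvalues i := by
  conv_lhs => rw [hA.spectral_theorem]
  rw [Unitary.conjStarAlgAut_apply, trace_mul_cycle]
  have h : (star (hA.eigenvectorUnitary : Matrix (Fin n) (Fin n) ℝ)) *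
      (hA.eigenvectorUnitary : Matrix (Fin n) (Fin n) ℝ) = 1 :=
    Matrix.mem_unitaryGroup_iff'.mp hA.eigenvectorUnitary.2
  rw [h, one_mul, trace_diagonal]
  simp

lemma det_nonneg_of_psd {n : ℕ} {A : Matrix (Fin n) (Fin n) ℝ}
    (hA : A.PosSemidef) : 0 ≤ A.det := by
  have : A.det = ∏ i, hA.1.eigenvalues i := by
    simpa using hA.1.det_eq_prod_eigenvalues
  rw [this]
  exact Finset.prod_nonneg fun i _ => hA.eigenvalues_nonneg i

lemma trace_ge_det_rpow {n : ℕ} (hn : 0 < n) {A : Matrix (Fin n) (Fin n) ℝ}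
    (hA : A.PosSemidef) : (n : ℝ) * A.det ^ ((1 : ℝ) / n) ≤ A.trace := by
  have hnR : (0 : ℝ) < n := by exact_mod_cast hn
  have hlam : ∀ i ∈ Finset.univ, 0 ≤ hA.1.eigenvalues i := fun i _ =>
    hA.eigenvalues_nonneg i
  have hdet : A.det = ∏ i, hA.1.eigenvalues i := by
    simpa using hA.1.det_eq_prod_eigenvalues
  have htr : A.trace = ∑ i, hA.1.eigenvalues i := trace_eq_sum_eigs hA.1
  have amgm := Real.geom_mean_le_arith_mean_weighted Finset.univ
    (fun _ => (1 : ℝ) / n) hA.1.eigenvalues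
    (fun i _ => by positivity)
    (by simp [Finset.sum_const]; field_simp)
    hlam
  rw [Real.finset_prod_rpow _ _ hlam] at amgm
  rw [hdet, htr]
  calc (n : ℝ) * (∏ i, hA.1.eigenvalues i) ^ ((1 : ℝ) / n)
      ≤ (n : ℝ) * ∑ i, (1 : ℝ) / n * hA.1.eigenvalues i := by
        exact mul_le_mul_of_nonneg_left amgm hnR.le
    _ = ∑ i, hA.1.eigenvalues i := by
        rw [Finset.mul_sum]
        congr 1; ext i; field_simp

open scoped MatrixOrder in
lemma psd_sqrt_exists {n : ℕ} {B : Matrix (Fin n) (Fin n) ℝ} (hB : B.PosSemidef) :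
    ∃ S : Matrix (Fin n) (Fin n) ℝ, S.PosSemidef ∧ S * S = B :=
  ⟨CFC.sqrt B, (CFC.sqrt_nonneg B).posSemidef, CFC.sqrt_mul_sqrt_self B hB.nonneg⟩

theorem trace_mul_ge_of_posSemidef {n : ℕ} (hn : 0 < n)
    (B C : Matrix (Fin n) (Fin n) ℝ)
    (hB : B.PosSemidef) (hC : C.PosSemidef) :
    (B * C).trace ≥ (n : ℝ) * B.det ^ ((1 : ℝ) / n) * C.det ^ ((1 : ℝ) / n) ∧
      (B * C).trace ≥ 0 := by
  obtain ⟨S, hSpsd, hSS⟩ := psd_sqrt_exists hB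
  have hSsym : S.IsHermitian := hSpsd.1
  have hA : (S * C * S).PosSemidef := by
    have := hC.mul_mul_conjTranspose_same S
    rwa [hSsym.eq] at this
  have htr : (S * C * S).trace = (B * C).trace := by
    rw [trace_mul_cycle, hSS]
  have hdet : (S * C * S).det = B.det * C.det := by
    rw [det_mul, det_mul, ← mul_rotate, ← det_mul, hSS, mul_comm]
  have hBd : 0 ≤ B.det := det_nonneg_of_psd hB
  have hCd : 0 ≤ C.det := det_nonneg_of_psd hC
  have key := trace_ge_det_rpow hn hA
  rw [htr, hdet, Real.mul_rpow hBd hCd, ← mul_assoc] at key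
  refine ⟨key, le_trans ?_ key⟩
  positivity
end

section
/- Let C : [0,∞) → Sym₃⁺(ℝ) ∩ SL(3) be continuously differentiable with C(0) arbitrary in Sym₃⁺ ∩ SL(3), let λ₁ > 0, η_* ≥ 0, and let Ξ : [0,∞) → Sym₃(ℝ) solve Ξ'(t) = -(1/λ₁)Ξ(t) - η_*(C⁻¹)'(t) with Ξ(0) positive semi-definite. Then Ξ(t) : C(t) ≥ 0 for all t ≥ 0. -/
open Matrix

set_option maxHeartbeats 1000000

attribute [local instance] Matrix.normedAddCommGroup Matrix.normedSpace

instance aux_enormed : ENormedAddMonoid (Matrix (Fin 3) (Fin 3) ℝ) :=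
  (inferInstance : ENormedAddMonoid (Fin 3 → Fin 3 → ℝ))

lemma aux_trace_nonneg {n : Type*} [Fintype n] [DecidableEq n]
    {M : Matrix n n ℝ} (hM : M.PosSemidef) : 0 ≤ M.trace := by
  rw [Matrix.trace]
  refine Finset.sum_nonneg fun i _ => ?_
  exact hM.diag_nonneg

open scoped MatrixOrder in
lemma aux_trace_mul_nonneg {n : Type*} [Fintype n] [DecidableEq n]
    {A B : Matrix n n ℝ} (hA : A.PosSemidef) (hB : B.PosSemidef) : 0 ≤ (A * B).trace := by
  have herm : (CFC.sqrt B)ᴴ = CFC.sqrt B := (CFC.sqrt_nonneg B).posSemidef.1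
  have h1 : (A * B).trace = (CFC.sqrt B * A * CFC.sqrt B).trace := by
    conv_lhs => rw [← CFC.sqrt_mul_sqrt_self B hB.nonneg, ← Matrix.mul_assoc, Matrix.trace_mul_cycle]
  rw [h1]
  have h2 := hA.mul_mul_conjTranspose_same (CFC.sqrt B)
  rw [herm] at h2
  exact aux_trace_nonneg h2

lemma aux_trace_ge_three {M : Matrix (Fin 3) (Fin 3) ℝ} (hM : M.PosSemidef)
    (hdet : M.det = 1) : 3 ≤ M.trace := by
  have hH : M.IsHermitian := hM.1
  have htr : M.trace = ∑ i, hH.eigenvalues i := by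
    simpa using hH.trace_eq_sum_eigenvalues
  have hprod : ∏ i, hH.eigenvalues i = 1 := by
    have := hH.det_eq_prod_eigenvalues
    rw [hdet] at this
    exact_mod_cast this.symm
  have hpos : ∀ i, 0 ≤ hH.eigenvalues i := fun i => hM.eigenvalues_nonneg i
  rw [htr, Fin.sum_univ_three]
  rw [Fin.prod_univ_three] at hprod
  set a := hH.eigenvalues 0
  set b := hH.eigenvalues 1
  set c := hH.eigenvalues 2
  have h := Real.geom_mean_le_arith_mean3_weighted (by norm_num) (by norm_num) (by norm_num)
    (hpos 0) (hpos 1) (hpos 2) (by norm_num : (1:ℝ)/3 + 1/3 + 1/3 = 1)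
  have hlhs : a ^ ((1:ℝ)/3) * b ^ ((1:ℝ)/3) * c ^ ((1:ℝ)/3) = 1 := by
    rw [← Real.mul_rpow (hpos 0) (hpos 1), ← Real.mul_rpow (mul_nonneg (hpos 0) (hpos 1)) (hpos 2),
      hprod, Real.one_rpow]
  rw [hlhs] at h
  linarith

open scoped MatrixOrder in
lemma aux_trace_inv_mul_ge {A B : Matrix (Fin 3) (Fin 3) ℝ} (hA : A.PosDef) (hB : B.PosDef)
    (hdA : A.det = 1) (hdB : B.det = 1) : 3 ≤ (A⁻¹ * B).trace := by
  have hAi : A⁻¹.PosSemidef := hA.posSemidef.inv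
  have hBs : B.PosSemidef := hB.posSemidef
  have herm : (CFC.sqrt B)ᴴ = CFC.sqrt B := (CFC.sqrt_nonneg B).posSemidef.1
  have hMpsd : ((CFC.sqrt B) * A⁻¹ * (CFC.sqrt B)).PosSemidef := by
    have h2 := hAi.mul_mul_conjTranspose_same (CFC.sqrt B)
    rwa [herm] at h2
  have hdet : ((CFC.sqrt B) * A⁻¹ * (CFC.sqrt B)).det = 1 := by
    have hss : (CFC.sqrt B).det * (CFC.sqrt B).det = 1 := by
      rw [← Matrix.det_mul, CFC.sqrt_mul_sqrt_self B hBs.nonneg, hdB]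
    have hAid : A⁻¹.det = 1 := by
      rw [Matrix.det_nonsing_inv, hdA, Ring.inverse_one]
    rw [Matrix.det_mul, Matrix.det_mul, hAid]
    nlinarith
  have htr : ((CFC.sqrt B) * A⁻¹ * (CFC.sqrt B)).trace = (A⁻¹ * B).trace := by
    rw [Matrix.trace_mul_cycle, CFC.sqrt_mul_sqrt_self B hBs.nonneg, Matrix.trace_mul_comm]
  calc (3:ℝ) ≤ ((CFC.sqrt B) * A⁻¹ * (CFC.sqrt B)).trace := aux_trace_ge_three hMpsd hdet
    _ = (A⁻¹ * B).trace := htr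

theorem oldroydB_dissipation_nonneg
    (lam η : ℝ) (hlam : 0 < lam) (hη : 0 ≤ η)
    (C Ξ Cinv' Ξ' : ℝ → Matrix (Fin 3) (Fin 3) ℝ)
    (hCpos : ∀ t, 0 ≤ t → (C t).PosDef)
    (hCdet : ∀ t, 0 ≤ t → (C t).det = 1)
    (hCderiv : ∀ t, 0 ≤ t → HasDerivAt (fun s => (C s)⁻¹) (Cinv' t) t)
    (hCcont : Continuous Cinv')
    (hΞderiv : ∀ t, 0 ≤ t → HasDerivAt Ξ (Ξ' t) t)
    (hODE : ∀ t, 0 ≤ t → Ξ' t = -(1 / lam) • Ξ t - η • Cinv' t)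
    (hΞ0 : (Ξ 0).PosSemidef) :
    ∀ t, 0 ≤ t → (Ξ t * C t).trace ≥ 0 := by
  intro t ht
  -- Setup
  set F : ℝ → Matrix (Fin 3) (Fin 3) ℝ :=
    fun s => Real.exp (s / lam) • (Ξ s + η • (C s)⁻¹) with hF
  set F' : ℝ → Matrix (Fin 3) (Fin 3) ℝ :=
    fun s => (η / lam * Real.exp (s / lam)) • (C s)⁻¹ with hF'
  have hFd : ∀ s ∈ Set.uIcc (0:ℝ) t, HasDerivAt F (F' s) s := by
    intro s hs
    rw [Set.uIcc_of_le ht] at hs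
    have hs0 : 0 ≤ s := hs.1
    have hexp : HasDerivAt (fun s => Real.exp (s / lam)) (Real.exp (s / lam) * (1 / lam)) s :=
      ((hasDerivAt_id s).div_const lam).exp
    have hin : HasDerivAt (fun s => Ξ s + η • (C s)⁻¹) (Ξ' s + η • Cinv' s) s :=
      (hΞderiv s hs0).add ((hCderiv s hs0).const_smul η)
    have := hexp.smul hin
    refine this.congr_deriv ?_
    rw [hODE s hs0]
    match_scalars <;> field_simp <;> ring
  have hCinvCont : ∀ s ∈ Set.uIcc (0:ℝ) t, ContinuousAt (fun u => (C u)⁻¹) s := by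
    intro s hs
    rw [Set.uIcc_of_le ht] at hs
    exact (hCderiv s hs.1).continuousAt
  have hF'cont : ContinuousOn F' (Set.uIcc (0:ℝ) t) := by
    intro s hs
    exact (((continuous_const.mul (Real.continuous_exp.comp
      (continuous_id.div_const lam))).continuousAt).smul (hCinvCont s hs)).continuousWithinAt
  have hF'int : IntervalIntegrable F' MeasureTheory.volume 0 t :=
    hF'cont.intervalIntegrable
  have key : ∫ s in (0:ℝ)..t, F' s = F t - F 0 :=
    intervalIntegral.integral_eq_sub_of_hasDerivAt hFd hF'int
  -- trace linear map against C t
  set L : Matrix (Fin 3) (Fin 3) ℝ →L[ℝ] ℝ :=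
    LinearMap.toContinuousLinearMap
      ((Matrix.traceLinearMap (Fin 3) ℝ ℝ).comp (LinearMap.mulRight ℝ (C t))) with hL
  have hLapp : ∀ A : Matrix (Fin 3) (Fin 3) ℝ, L A = (A * C t).trace := fun A => rfl
  have keyL : ∫ s in (0:ℝ)..t, L (F' s) = L (F t) - L (F 0) := by
    rw [show ∫ s in (0:ℝ)..t, L (F' s) = L (∫ s in (0:ℝ)..t, F' s) from
      L.intervalIntegral_comp_comm hF'int, key, map_sub]
  -- lower bound on the integrand
  have hCt : (C t).PosDef := hCpos t ht
  have hCtdet : (C t).det = 1 := hCdet t ht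
  have hbound : ∀ s ∈ Set.Icc (0:ℝ) t,
      (η / lam * Real.exp (s / lam)) * 3 ≤ L (F' s) := by
    intro s hs
    have h3 : 3 ≤ ((C s)⁻¹ * C t).trace :=
      aux_trace_inv_mul_ge (hCpos s hs.1) hCt (hCdet s hs.1) hCtdet
    have hc : 0 ≤ η / lam * Real.exp (s / lam) :=
      mul_nonneg (div_nonneg hη hlam.le) (Real.exp_pos _).le
    rw [hLapp, hF', Matrix.smul_mul, Matrix.trace_smul, smul_eq_mul]
    exact mul_le_mul_of_nonneg_left h3 hc
  -- compute the comparison integral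
  have hGd : ∀ s ∈ Set.uIcc (0:ℝ) t,
      HasDerivAt (fun u => 3 * η * Real.exp (u / lam)) ((η / lam * Real.exp (s / lam)) * 3) s := by
    intro s _
    have := (((hasDerivAt_id s).div_const lam).exp).const_mul (3 * η)
    refine this.congr_deriv ?_
    simp only [id]
    ring
  have hGint : IntervalIntegrable (fun s => (η / lam * Real.exp (s / lam)) * 3)
      MeasureTheory.volume 0 t :=
    (Continuous.intervalIntegrable ((continuous_const.mul (Real.continuous_exp.comp (continuous_id.div_const lam))).mul continuous_const) 0 t)
  have hGval : ∫ s in (0:ℝ)..t, (η / lam * Real.exp (s / lam)) * 3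
      = 3 * η * Real.exp (t / lam) - 3 * η * Real.exp (0 / lam) :=
    intervalIntegral.integral_eq_sub_of_hasDerivAt hGd hGint
  have hLFcont : ContinuousOn (fun s => L (F' s)) (Set.uIcc (0:ℝ) t) :=
    L.continuous.comp_continuousOn hF'cont
  have hLFint : IntervalIntegrable (fun s => L (F' s)) MeasureTheory.volume 0 t :=
    hLFcont.intervalIntegrable
  have hmono : ∫ s in (0:ℝ)..t, (η / lam * Real.exp (s / lam)) * 3
      ≤ ∫ s in (0:ℝ)..t, L (F' s) :=
    intervalIntegral.integral_mono_on ht hGint hLFint hbound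
  -- assemble
  have hexp0 : Real.exp (0 / lam) = 1 := by norm_num
  have hCtinv : ((C t)⁻¹ * C t).trace = 3 := by
    rw [Matrix.nonsing_inv_mul (C t) (by rw [hCtdet]; exact isUnit_one)]
    simp [Matrix.trace_one]
  have hLFt : L (F t) = Real.exp (t / lam) * ((Ξ t * C t).trace + η * 3) := by
    rw [hLapp, hF]
    simp only [Matrix.smul_mul, Matrix.add_mul, Matrix.trace_smul, Matrix.trace_add,
      smul_eq_mul, hCtinv]
  have hLF0 : L (F 0) = (Ξ 0 * C t).trace + η * ((C 0)⁻¹ * C t).trace := by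
    rw [hLapp, hF]
    simp only [Matrix.smul_mul, Matrix.add_mul, Matrix.trace_smul, Matrix.trace_add,
      smul_eq_mul, hexp0]
    ring
  have h1 : 0 ≤ (Ξ 0 * C t).trace := aux_trace_mul_nonneg hΞ0 hCt.posSemidef
  have h2 : 3 ≤ ((C 0)⁻¹ * C t).trace :=
    aux_trace_inv_mul_ge (hCpos 0 le_rfl) hCt (hCdet 0 le_rfl) hCtdet
  have hexpt : 0 < Real.exp (t / lam) := Real.exp_pos _
  rw [hGval, hexp0] at hmono
  rw [keyL, hLFt, hLF0] at hmono
  have : 3 * η * Real.exp (t / lam) - 3 * η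
      ≤ Real.exp (t / lam) * ((Ξ t * C t).trace + η * 3) - ((Ξ 0 * C t).trace + η * ((C 0)⁻¹ * C t).trace) := by
    convert hmono using 2
    ring
  nlinarith [mul_nonneg hη (sub_nonneg.mpr h2), hexpt]
end

section
/- Let λ₁ = 1, η_p > 0, μ > 0, F(t) = diag(eᵗ, e⁻ᵗ, 1). Let Ξ solve ∂Ξ/∂t = -Ξ + (2η_p/μ) F⁻¹ Sym(F'F⁻¹) F⁻ᵀ. Then for every positive semi-definite initial value Ξ(0), the explicit solution is Ξ(t) = e⁻ᵗΞ(0) + (2η_p/μ)·diag(e⁻ᵗ - e⁻²ᵗ, (e⁻ᵗ - e²ᵗ)/3, 0), and the smallest eigenvalue of Ξ(t) tends to -∞ as t → ∞; hence Ξ exits the cone of positive semi-definite matrices in finite time. -/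
open Matrix
attribute [local instance] Matrix.normedAddCommGroup Matrix.normedSpace

lemma diag3_eq (a b c : ℝ) : Matrix.diagonal ![a,b,c]
    = a • Matrix.single 0 0 1 + b • Matrix.single 1 1 1
      + c • Matrix.single 2 2 1 := by
  ext i j
  fin_cases i <;> fin_cases j <;>
    simp [Matrix.single, Matrix.diagonal]

lemma hasDerivAt_diag3 {a b c : ℝ → ℝ} {a' b' c' : ℝ} {t : ℝ}
    (ha : HasDerivAt a a' t) (hb : HasDerivAt b b' t) (hc : HasDerivAt c c' t) :
    HasDerivAt (fun s => Matrix.diagonal ![a s, b s, c s])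
      (Matrix.diagonal ![a', b', c']) t := by
  simp only [diag3_eq]
  exact ((ha.smul_const _).add (hb.smul_const _)).add (hc.smul_const _)

theorem oldroydB_exits_psd_cone
    (ηp μ : ℝ) (hηp : 0 < ηp) (hμ : 0 < μ)
    (F : ℝ → Matrix (Fin 3) (Fin 3) ℝ)
    (hF : ∀ t, F t = Matrix.diagonal ![Real.exp t, Real.exp (-t), 1])
    (Ξ : ℝ → Matrix (Fin 3) (Fin 3) ℝ)
    (hΞderiv : ∀ t, HasDerivAt Ξ
      (-Ξ t + (2 * ηp / μ) •
        ((F t)⁻¹ * (((1 : ℝ)/2) • (deriv F t * (F t)⁻¹ + (deriv F t * (F t)⁻¹)ᵀ)) * (F t)⁻¹ᵀ)) t)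
    (hΞ0 : (Ξ 0).PosSemidef) :
    (∀ t, Ξ t = Real.exp (-t) • Ξ 0 + (2 * ηp / μ) •
        Matrix.diagonal ![Real.exp (-t) - Real.exp (-2*t),
          (Real.exp (-t) - Real.exp (2*t)) / 3, 0]) ∧
    (∀ M : ℝ, ∃ T : ℝ, ∀ t, T ≤ t → ∃ v : Fin 3 → ℝ, v ≠ 0 ∧
        v ⬝ᵥ (Ξ t) *ᵥ v < M * (v ⬝ᵥ v)) ∧
    (∃ T : ℝ, ∀ t, T ≤ t → ¬ (Ξ t).PosSemidef) := by
  set c : ℝ := 2 * ηp / μ with hc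
  have hc0 : 0 < c := by positivity
  have hFe : F = fun s => Matrix.diagonal ![Real.exp s, Real.exp (-s), 1] := funext hF
  subst hFe
  -- derivative of F
  have hexpneg : ∀ t : ℝ, HasDerivAt (fun s => Real.exp (-s)) (-Real.exp (-t)) t := by
    intro t
    simpa [Function.comp_def] using ((Real.hasDerivAt_exp (-t)).comp t (hasDerivAt_neg t))
  have hF' : ∀ t : ℝ, HasDerivAt (fun s => Matrix.diagonal ![Real.exp s, Real.exp (-s), (1:ℝ)])
      (Matrix.diagonal ![Real.exp t, -Real.exp (-t), 0]) t := fun t =>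
    hasDerivAt_diag3 (Real.hasDerivAt_exp t) (hexpneg t) (hasDerivAt_const t 1)
  have hderivF : ∀ t : ℝ, deriv (fun s => Matrix.diagonal ![Real.exp s, Real.exp (-s), (1:ℝ)]) t
      = Matrix.diagonal ![Real.exp t, -Real.exp (-t), 0] := fun t => (hF' t).deriv
  -- inverse of F
  have hInv : ∀ t : ℝ, (Matrix.diagonal ![Real.exp t, Real.exp (-t), (1:ℝ)])⁻¹
      = Matrix.diagonal ![Real.exp (-t), Real.exp t, 1] := by
    intro t
    apply Matrix.inv_eq_right_inv
    ext i j
    fin_cases i <;> fin_cases j <;>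
      simp [Matrix.mul_apply, Fin.sum_univ_three, Matrix.one_apply, ← Real.exp_add]
  -- the forcing term
  have key : ∀ t : ℝ,
      ((Matrix.diagonal ![Real.exp t, Real.exp (-t), (1:ℝ)])⁻¹ *
        (((1 : ℝ)/2) • (deriv (fun s => Matrix.diagonal ![Real.exp s, Real.exp (-s), (1:ℝ)]) t *
            (Matrix.diagonal ![Real.exp t, Real.exp (-t), (1:ℝ)])⁻¹ +
          (deriv (fun s => Matrix.diagonal ![Real.exp s, Real.exp (-s), (1:ℝ)]) t *
            (Matrix.diagonal ![Real.exp t, Real.exp (-t), (1:ℝ)])⁻¹)ᵀ)) *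
        (Matrix.diagonal ![Real.exp t, Real.exp (-t), (1:ℝ)])⁻¹ᵀ)
      = Matrix.diagonal ![Real.exp (-(2*t)), -Real.exp (2*t), 0] := by
    intro t
    rw [hderivF, hInv, Matrix.diagonal_transpose]
    ext i j
    fin_cases i <;> fin_cases j <;>
      simp [Matrix.mul_apply, Fin.sum_univ_three, ← Real.exp_add] <;> ring_nf <;>
        simp [sq, ← Real.exp_add] <;> ring_nf
  have hΞ' : ∀ t : ℝ, HasDerivAt Ξ
      (-Ξ t + c • Matrix.diagonal ![Real.exp (-(2*t)), -Real.exp (2*t), 0]) t := by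
    intro t
    have h := hΞderiv t
    rwa [key t] at h
  -- the auxiliary function Y
  set G : ℝ → Matrix (Fin 3) (Fin 3) ℝ :=
    fun t => Matrix.diagonal ![1 - Real.exp (-t), (1 - Real.exp (3*t))/3, 0] with hG
  set Y : ℝ → Matrix (Fin 3) (Fin 3) ℝ := fun t => Real.exp t • Ξ t - c • G t with hY
  have hsm : ∀ t : ℝ, Real.exp t • Matrix.diagonal ![Real.exp (-(2*t)), -Real.exp (2*t), (0:ℝ)]
      = Matrix.diagonal ![Real.exp (-t), -Real.exp (3*t), 0] := by
    intro t
    rw [← Matrix.diagonal_smul]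
    congr 1
    funext i
    fin_cases i <;> simp [← Real.exp_add] <;> ring_nf
  have hYderiv : ∀ t : ℝ, HasDerivAt Y 0 t := by
    intro t
    have h1 : HasDerivAt (fun s => Real.exp s • Ξ s)
        (Real.exp t •
          (-Ξ t + c • Matrix.diagonal ![Real.exp (-(2*t)), -Real.exp (2*t), 0])
          + Real.exp t • Ξ t) t :=
      (Real.hasDerivAt_exp t).smul (hΞ' t)
    have hb : HasDerivAt (fun s => (1 - Real.exp (3*s))/3) (-Real.exp (3*t)) t := by
      have h3 : HasDerivAt (fun s : ℝ => Real.exp (3*s)) (Real.exp (3*t) * 3) t := by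
        simpa [Function.comp_def] using
          (Real.hasDerivAt_exp (3*t)).comp t ((hasDerivAt_id t).const_mul 3)
      have h4 := (h3.const_sub 1).div_const 3
      have h5 : -(Real.exp (3*t) * 3) / 3 = -Real.exp (3*t) := by ring
      rw [h5] at h4
      exact h4
    have ha : HasDerivAt (fun s => 1 - Real.exp (-s)) (Real.exp (-t)) t := by
      simpa [Pi.sub_def] using (hasDerivAt_const t (1:ℝ)).sub (hexpneg t)
    have h2 : HasDerivAt G (Matrix.diagonal ![Real.exp (-t), -Real.exp (3*t), 0]) t :=
      hasDerivAt_diag3 ha hb (hasDerivAt_const t 0)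
    have h6 := h1.sub (h2.const_smul c)
    have h7 : Real.exp t •
        (-Ξ t + c • Matrix.diagonal ![Real.exp (-(2*t)), -Real.exp (2*t), 0])
        + Real.exp t • Ξ t
        - c • Matrix.diagonal ![Real.exp (-t), -Real.exp (3*t), 0] = 0 := by
      rw [← hsm t, smul_add, smul_neg, smul_comm (Real.exp t) c]
      abel
    rw [h7] at h6
    exact h6
  have hYconst : ∀ t : ℝ, Y t = Y 0 :=
    fun t => is_const_of_deriv_eq_zero (fun s => (hYderiv s).differentiableAt)
      (fun s => (hYderiv s).deriv) t 0
  have hG0 : G 0 = 0 := by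
    rw [hG]
    ext i j
    fin_cases i <;> fin_cases j <;> norm_num [Matrix.diagonal]
  have hY0 : Y 0 = Ξ 0 := by
    rw [hY]
    simp [hG0]
  -- Part 1 : explicit formula
  have part1 : ∀ t, Ξ t = Real.exp (-t) • Ξ 0 + c •
      Matrix.diagonal ![Real.exp (-t) - Real.exp (-2*t),
        (Real.exp (-t) - Real.exp (2*t)) / 3, 0] := by
    intro t
    have h := hYconst t
    rw [hY0] at h
    have h1 : Real.exp t • Ξ t = Ξ 0 + c • G t := by
      have := sub_eq_iff_eq_add.mp h
      simpa using this
    have hGt : Real.exp (-t) • G t = Matrix.diagonal ![Real.exp (-t) - Real.exp (-2*t),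
        (Real.exp (-t) - Real.exp (2*t)) / 3, 0] := by
      rw [hG, ← Matrix.diagonal_smul]
      congr 1
      funext i
      fin_cases i <;> simp [mul_sub, mul_div_assoc, ← Real.exp_add] <;> ring_nf <;>
        simp [← Real.exp_add] <;> ring_nf
    calc Ξ t = Real.exp (-t) • (Real.exp t • Ξ t) := by
          rw [smul_smul, ← Real.exp_add]; norm_num
      _ = Real.exp (-t) • (Ξ 0 + c • G t) := by rw [h1]
      _ = Real.exp (-t) • Ξ 0 + c • (Real.exp (-t) • G t) := by
          rw [smul_add, smul_comm (Real.exp (-t)) c]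
      _ = _ := by rw [hGt]
  -- the test vector
  set v : Fin 3 → ℝ := ![0,1,0] with hv
  have hv0 : v ≠ 0 := by
    intro h
    have := congrFun h 1
    simp [hv] at this
  have hvv : v ⬝ᵥ v = 1 := by
    simp [hv, dotProduct, Fin.sum_univ_three]
  have hquad : ∀ t, v ⬝ᵥ (Ξ t) *ᵥ v
      = Real.exp (-t) * (Ξ 0) 1 1 + c * ((Real.exp (-t) - Real.exp (2*t))/3) := by
    intro t
    rw [part1 t]
    simp [hv, dotProduct, Matrix.mulVec, Fin.sum_univ_three,
      Matrix.add_apply, Matrix.smul_apply, Matrix.diagonal_apply, smul_eq_mul]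
  have hA : 0 ≤ (Ξ 0) 1 1 := by
    have h := hΞ0.dotProduct_mulVec_nonneg v
    simpa [hv, dotProduct, Matrix.mulVec, Fin.sum_univ_three] using h
  have part2 : ∀ M : ℝ, ∃ T : ℝ, ∀ t, T ≤ t → ∃ w : Fin 3 → ℝ, w ≠ 0 ∧
      w ⬝ᵥ (Ξ t) *ᵥ w < M * (w ⬝ᵥ w) := by
    intro M
    set A := (Ξ 0) 1 1
    set K : ℝ := max 1 (3*(A + c/3 - M)/c + 1) with hK
    refine ⟨Real.log K, fun t ht => ⟨v, hv0, ?_⟩⟩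
    have hK1 : (1:ℝ) ≤ K := le_max_left _ _
    have hKpos : (0:ℝ) < K := lt_of_lt_of_le one_pos hK1
    have hT0 : 0 ≤ Real.log K := Real.log_nonneg hK1
    have ht0 : 0 ≤ t := le_trans hT0 ht
    have h1 : Real.exp (-t) ≤ 1 := Real.exp_le_one_iff.2 (by linarith)
    have h2 : K ≤ Real.exp t := by
      rw [← Real.exp_log hKpos]
      exact Real.exp_le_exp.2 ht
    have h3 : Real.exp t ≤ Real.exp (2*t) := Real.exp_le_exp.2 (by linarith)
    have hKge : 3*(A + c/3 - M)/c + 1 ≤ K := le_max_right _ _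
    have hexp : 3*(A + c/3 - M)/c + 1 ≤ Real.exp (2*t) := le_trans hKge (le_trans h2 h3)
    rw [hquad t, hvv, mul_one]
    have hmul : c * (3*(A + c/3 - M)/c + 1) ≤ c * Real.exp (2*t) :=
      mul_le_mul_of_nonneg_left hexp hc0.le
    rw [mul_add, mul_div_cancel₀ _ (ne_of_gt hc0)] at hmul
    nlinarith [mul_le_of_le_one_left hA h1, mul_le_of_le_one_right hc0.le h1]
  refine ⟨part1, part2, ?_⟩
  obtain ⟨T, hT⟩ := part2 0
  refine ⟨T, fun t ht hpsd => ?_⟩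
  obtain ⟨w, hw0, hlt⟩ := hT t ht
  have h0 : (0:ℝ) ≤ w ⬝ᵥ (Ξ t) *ᵥ w := by
    simpa using hpsd.dotProduct_mulVec_nonneg w
  rw [zero_mul] at hlt
  linarith
end

section
/- Let Z : [0,T) → M₃(ℝ) solve the homogeneous matrix Riccati equation Z' + Z C Z = 0, where C : [0,∞) → Sym₃⁺(ℝ) is continuous and Z(0) is symmetric positive semi-definite. Then for all t ≥ 0 the matrix Y(t) = I + (∫₀ᵗ C(s) ds) Z(0) is invertible, and Z(t) = Z(0) Y(t)⁻¹ is a global solution. -/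
open Matrix

attribute [local instance] Matrix.normedAddCommGroup Matrix.normedSpace

namespace RiccatiAux

abbrev M3 := Matrix (Fin 3) (Fin 3) ℝ

variable {F G : ℝ → M3} {F' G' : M3} {t : ℝ}

lemma entry_hasDerivAt (h : HasDerivAt F F' t) (i j : Fin 3) :
    HasDerivAt (fun u => F u i j) (F' i j) t :=
  hasDerivAt_pi.mp (hasDerivAt_pi.mp h i) j

lemma hasDerivAt_of_entries (h : ∀ i j, HasDerivAt (fun u => F u i j) (F' i j) t) :
    HasDerivAt F F' t :=
  hasDerivAt_pi.mpr fun i => hasDerivAt_pi.mpr fun j => h i j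

lemma matMul (hF : HasDerivAt F F' t) (hG : HasDerivAt G G' t) :
    HasDerivAt (fun u => F u * G u) (F' * G t + F t * G') t := by
  apply hasDerivAt_of_entries
  intro i j
  simp only [Matrix.add_apply, Matrix.mul_apply, ← Finset.sum_add_distrib]
  exact HasDerivAt.fun_sum fun k _ => (entry_hasDerivAt hF i k).mul (entry_hasDerivAt hG k j)

lemma differentiableAt_det {M : ℝ → M3}
    (h : ∀ i j, DifferentiableAt ℝ (fun u => M u i j) t) :
    DifferentiableAt ℝ (fun u => (M u).det) t := by
  simp only [Matrix.det_apply']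
  exact DifferentiableAt.fun_sum fun σ _ =>
    (DifferentiableAt.fun_finsetProd fun i _ => h (σ i) i).const_mul _

lemma differentiableAt_inv {M : ℝ → M3}
    (h : ∀ i j, DifferentiableAt ℝ (fun u => M u i j) t)
    (hdet : (M t).det ≠ 0) :
    DifferentiableAt ℝ (fun u => (M u)⁻¹) t := by
  have hadj : ∀ i j, DifferentiableAt ℝ (fun u => (M u).adjugate i j) t := by
    intro i j
    simp only [Matrix.adjugate_apply]
    apply differentiableAt_det
    intro a b
    simp only [Matrix.updateRow_apply]
    by_cases hab : a = j
    · simp [hab]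
    · simpa [hab] using h a b
  have hdi : DifferentiableAt ℝ (fun u => ((M u).det)⁻¹) t :=
    (differentiableAt_det h).inv hdet
  have heq : (fun u => (M u)⁻¹) = fun u => ((M u).det)⁻¹ • (M u).adjugate := by
    funext u; rw [Matrix.inv_def, Ring.inverse_eq_inv']
  rw [heq]
  exact hdi.smul (differentiableAt_pi.mpr fun i => differentiableAt_pi.mpr fun j => hadj i j)

lemma hasDerivAt_matInv (hF : HasDerivAt F F' t) (hu : IsUnit (F t)) :
    HasDerivAt (fun u => (F u)⁻¹) (-((F t)⁻¹ * F' * (F t)⁻¹)) t := by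
  have hudet : IsUnit (F t).det := (Matrix.isUnit_iff_isUnit_det _).mp hu
  have hdet : (F t).det ≠ 0 := hudet.ne_zero
  have hent : ∀ i j, DifferentiableAt ℝ (fun u => F u i j) t := fun i j =>
    (entry_hasDerivAt hF i j).differentiableAt
  have hinv : DifferentiableAt ℝ (fun u => (F u)⁻¹) t := differentiableAt_inv hent hdet
  set D := deriv (fun u => (F u)⁻¹) t with hD
  have hDd : HasDerivAt (fun u => (F u)⁻¹) D t := hinv.hasDerivAt
  have hdetc : ContinuousAt (fun u => (F u).det) t := (differentiableAt_det hent).continuousAt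
  have hev : ∀ᶠ u in nhds t, (F u).det ≠ 0 := hdetc.eventually_ne hdet
  have hone : (fun u => F u * (F u)⁻¹) =ᶠ[nhds t] fun _ => (1 : M3) :=
    hev.mono fun u h => Matrix.mul_nonsing_inv _ (isUnit_iff_ne_zero.mpr h)
  have h0 : HasDerivAt (fun u => F u * (F u)⁻¹) 0 t :=
    (hasDerivAt_const t (1 : M3)).congr_of_eventuallyEq hone
  have hmul : HasDerivAt (fun u => F u * (F u)⁻¹) (F' * (F t)⁻¹ + F t * D) t :=
    matMul hF hDd
  have hzero : F' * (F t)⁻¹ + F t * D = 0 := hmul.unique h0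
  have hDval : D = -((F t)⁻¹ * F' * (F t)⁻¹) := by
    have h1 : F t * D = -(F' * (F t)⁻¹) := by
      rw [eq_neg_iff_add_eq_zero, add_comm]; exact hzero
    calc D = (F t)⁻¹ * (F t * D) := by
            rw [← Matrix.mul_assoc, Matrix.nonsing_inv_mul _ hudet, Matrix.one_mul]
      _ = -((F t)⁻¹ * F' * (F t)⁻¹) := by rw [h1, Matrix.mul_neg, Matrix.mul_assoc]
  rw [← hDval]; exact hDd

end RiccatiAux
namespace RiccatiAux2

abbrev M3 := Matrix (Fin 3) (Fin 3) ℝ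

noncomputable def entryCLM (i j : Fin 3) : M3 →L[ℝ] ℝ :=
  LinearMap.toContinuousLinearMap
    { toFun := fun A => A i j
      map_add' := fun _ _ => rfl
      map_smul' := fun _ _ => rfl }

noncomputable def quadCLM (x : Fin 3 → ℝ) : M3 →L[ℝ] ℝ :=
  LinearMap.toContinuousLinearMap
    { toFun := fun A => x ⬝ᵥ A *ᵥ x
      map_add' := fun A B => by simp [Matrix.add_mulVec, dotProduct_add]
      map_smul' := fun c A => by simp [Matrix.smul_mulVec, dotProduct_smul] }

lemma key_unit {M Z : M3} (hM : M.PosSemidef) (hZ : Z.PosSemidef) :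
    IsUnit (1 + M * Z) := by
  rw [Matrix.isUnit_iff_isUnit_det, isUnit_iff_ne_zero]
  intro hdet
  obtain ⟨v, hv0, hv⟩ := (Matrix.exists_mulVec_eq_zero_iff).mpr hdet
  have h1 : v + M *ᵥ (Z *ᵥ v) = 0 := by
    simpa [Matrix.add_mulVec, Matrix.one_mulVec, Matrix.mulVec_mulVec] using hv
  have h2 : (Z *ᵥ v) ⬝ᵥ v + (Z *ᵥ v) ⬝ᵥ (M *ᵥ (Z *ᵥ v)) = 0 := by
    have := congrArg (fun w => (Z *ᵥ v) ⬝ᵥ w) h1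
    simpa [dotProduct_add] using this
  have ha : 0 ≤ (Z *ᵥ v) ⬝ᵥ v := by
    have := hZ.dotProduct_mulVec_nonneg v
    rw [star_trivial] at this
    rwa [dotProduct_comm]
  have hb : 0 ≤ (Z *ᵥ v) ⬝ᵥ (M *ᵥ (Z *ᵥ v)) := by
    have := hM.dotProduct_mulVec_nonneg (Z *ᵥ v)
    rwa [star_trivial] at this
  have haz : v ⬝ᵥ Z *ᵥ v = 0 := by
    rw [dotProduct_comm]; linarith
  have hZv : Z *ᵥ v = 0 := by
    have := (hZ.dotProduct_mulVec_zero_iff v).mp (by rwa [star_trivial])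
    exact this
  rw [hZv, Matrix.mulVec_zero, add_zero] at h1
  exact hv0 h1

lemma integral_posSemidef {C : ℝ → M3} (hc : Continuous C)
    (hpos : ∀ s, (C s).PosDef) {t : ℝ} (ht : 0 ≤ t) :
    (∫ s in (0:ℝ)..t, C s).PosSemidef := by
  have hint := hc.intervalIntegrable (μ := MeasureTheory.volume) 0 t
  refine PosSemidef.of_dotProduct_mulVec_nonneg ?_ ?_
  · ext i j
    have h1 := (entryCLM j i).intervalIntegral_comp_comm hint
    have h2 := (entryCLM i j).intervalIntegral_comp_comm hint
    simp only [entryCLM, LinearMap.coe_toContinuousLinearMap', LinearMap.coe_mk,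
      AddHom.coe_mk] at h1 h2
    replace h1 : (∫ s in (0:ℝ)..t, (C s) j i) = (∫ s in (0:ℝ)..t, C s) j i := h1
    replace h2 : (∫ s in (0:ℝ)..t, (C s) i j) = (∫ s in (0:ℝ)..t, C s) i j := h2
    show (∫ s in (0:ℝ)..t, C s) j i = (∫ s in (0:ℝ)..t, C s) i j
    rw [← h1, ← h2]
    congr 1
    funext s
    have := (hpos s).1
    have : (C s) j i = (C s) i j := by
      conv_lhs => rw [← this]
      simp [Matrix.conjTranspose_apply]
    exact this
  · intro x
    rw [star_trivial]
    have h2 := (quadCLM x).intervalIntegral_comp_comm hint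
    simp only [quadCLM, LinearMap.coe_toContinuousLinearMap', LinearMap.coe_mk,
      AddHom.coe_mk] at h2
    replace h2 : (∫ s in (0:ℝ)..t, x ⬝ᵥ C s *ᵥ x) = x ⬝ᵥ (∫ s in (0:ℝ)..t, C s) *ᵥ x := h2
    rw [← h2]
    apply intervalIntegral.integral_nonneg ht
    intro s _
    have := (hpos s).posSemidef.dotProduct_mulVec_nonneg x
    rwa [star_trivial] at this

end RiccatiAux2

open RiccatiAux RiccatiAux2

theorem riccati_global_solution
    (C : ℝ → Matrix (Fin 3) (Fin 3) ℝ) (hCcont : Continuous C)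
    (hCpos : ∀ s, (C s).PosDef)
    (Z₀ : Matrix (Fin 3) (Fin 3) ℝ) (hZ₀ : Z₀.PosSemidef) :
    ∀ t, 0 ≤ t →
      IsUnit (1 + (∫ s in (0:ℝ)..t, C s) * Z₀) ∧
      HasDerivAt (fun u => Z₀ * (1 + (∫ s in (0:ℝ)..u, C s) * Z₀)⁻¹)
        (-((Z₀ * (1 + (∫ s in (0:ℝ)..t, C s) * Z₀)⁻¹) * C t *
            (Z₀ * (1 + (∫ s in (0:ℝ)..t, C s) * Z₀)⁻¹))) t := by
  intro t ht
  set g : ℝ → RiccatiAux.M3 := fun u => ∫ s in (0:ℝ)..u, C s with hg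
  have hunit : IsUnit (1 + g t * Z₀) :=
    key_unit (integral_posSemidef hCcont hCpos ht) hZ₀
  refine ⟨hunit, ?_⟩
  have hgd : HasDerivAt g (C t) t := (hCcont.integral_hasStrictDerivAt 0 t).hasDerivAt
  have hFd : HasDerivAt (fun u => 1 + g u * Z₀) (C t * Z₀) t := by
    have := (hasDerivAt_const t (1 : RiccatiAux.M3)).add (matMul hgd (hasDerivAt_const t Z₀))
    simp only [zero_add, mul_zero, add_zero] at this
    exact this
  have hinv : HasDerivAt (fun u => (1 + g u * Z₀)⁻¹)
      (-((1 + g t * Z₀)⁻¹ * (C t * Z₀) * (1 + g t * Z₀)⁻¹)) t :=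
    hasDerivAt_matInv hFd hunit
  have := matMul (F := fun _ => Z₀) (hasDerivAt_const t Z₀) hinv
  simp only [zero_mul, zero_add] at this
  convert this using 1
  set B := (1 + g t * Z₀)⁻¹
  simp only [Matrix.mul_neg, Matrix.mul_assoc]
end

section
/- Let Ξ₀ ∈ Sym₃(ℝ) and β > 0. Suppose that for all F ∈ SL(3,ℝ): ‖FΞ₀Fᵀ‖² - (1/3)(tr(FΞ₀Fᵀ))² ≤ β·tr(FΞ₀Fᵀ). Then Ξ₀ = 0. -/
open Matrix

private lemma traceAtA (Ξ : Matrix (Fin 3) (Fin 3) ℝ) (d : Fin 3 → ℝ) :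
    ((Matrix.diagonal d * Ξ * (Matrix.diagonal d)ᵀ)ᵀ *
      (Matrix.diagonal d * Ξ * (Matrix.diagonal d)ᵀ)).trace =
      (d 0 * d 0)^2 * (Ξ 0 0)^2 + (d 0 * d 1)^2 * (Ξ 0 1)^2 + (d 0 * d 2)^2 * (Ξ 0 2)^2
      + (d 1 * d 0)^2 * (Ξ 1 0)^2 + (d 1 * d 1)^2 * (Ξ 1 1)^2 + (d 1 * d 2)^2 * (Ξ 1 2)^2
      + (d 2 * d 0)^2 * (Ξ 2 0)^2 + (d 2 * d 1)^2 * (Ξ 2 1)^2 + (d 2 * d 2)^2 * (Ξ 2 2)^2 := by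
  have hA : ∀ i j, (Matrix.diagonal d * Ξ * (Matrix.diagonal d)ᵀ) i j = d i * Ξ i j * d j := by
    intro i j
    simp [Matrix.mul_diagonal, Matrix.diagonal_mul]
  simp only [Matrix.trace_fin_three, Matrix.mul_apply, Fin.sum_univ_three,
    Matrix.transpose_apply, hA]
  ring

private lemma traceA (Ξ : Matrix (Fin 3) (Fin 3) ℝ) (d : Fin 3 → ℝ) :
    (Matrix.diagonal d * Ξ * (Matrix.diagonal d)ᵀ).trace
      = d 0 ^ 2 * Ξ 0 0 + d 1 ^ 2 * Ξ 1 1 + d 2 ^ 2 * Ξ 2 2 := by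
  have hA : ∀ i j, (Matrix.diagonal d * Ξ * (Matrix.diagonal d)ᵀ) i j = d i * Ξ i j * d j := by
    intro i j
    simp [Matrix.mul_diagonal, Matrix.diagonal_mul]
  simp only [Matrix.trace_fin_three, hA]
  ring

private lemma aux_limit (β a b c d e f : ℝ)
    (h : ∀ v : ℝ, 0 < v → v ≤ 1 →
      a^2 + b^2*v^8 + c^2*v^4 + 2*d^2*v^4 + 2*e^2*v^2 + 2*f^2*v^6
        - (1/3)*(a + b*v^4 + c*v^2)^2 - β*(a*v^2 + b*v^6 + c*v^4) ≤ 0) : a = 0 := by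
  set φ : ℝ → ℝ := fun v => a^2 + b^2*v^8 + c^2*v^4 + 2*d^2*v^4 + 2*e^2*v^2 + 2*f^2*v^6
      - (1/3)*(a + b*v^4 + c*v^2)^2 - β*(a*v^2 + b*v^6 + c*v^4) with hφ
  have hcont : Continuous φ := by fun_prop
  have htend : Filter.Tendsto φ (nhdsWithin 0 (Set.Ioi 0)) (nhds (φ 0)) :=
    (hcont.tendsto 0).mono_left nhdsWithin_le_nhds
  have hev : ∀ᶠ v in nhdsWithin (0:ℝ) (Set.Ioi 0), φ v ≤ 0 := by
    filter_upwards [Ioc_mem_nhdsGT_of_mem (Set.mem_Ico.mpr ⟨le_refl 0, zero_lt_one⟩)] with v hv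
    exact h v hv.1 hv.2
  have h0 : φ 0 ≤ 0 := le_of_tendsto htend hev
  have h2 : a ^ 2 ≤ 0 := by
    have he : φ 0 = (2/3) * a^2 := by simp [hφ]; ring
    rw [he] at h0
    linarith
  have h3 : a ^ 2 = 0 := le_antisymm h2 (sq_nonneg a)
  exact (pow_eq_zero_iff (two_ne_zero)).mp h3

set_option maxHeartbeats 1000000 in
theorem zaremba_jaumann_rigidity
    (Ξ₀ : Matrix (Fin 3) (Fin 3) ℝ) (hsym : Ξ₀ᵀ = Ξ₀) (β : ℝ) (hβ : 0 < β)
    (h : ∀ F : Matrix (Fin 3) (Fin 3) ℝ, F.det = 1 →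
      ((F * Ξ₀ * Fᵀ)ᵀ * (F * Ξ₀ * Fᵀ)).trace
        - (1/3) * ((F * Ξ₀ * Fᵀ).trace) ^ 2
        ≤ β * (F * Ξ₀ * Fᵀ).trace) :
    Ξ₀ = 0 := by
  have h10 : Ξ₀ 1 0 = Ξ₀ 0 1 := congrFun (congrFun hsym 0) 1
  have h20 : Ξ₀ 2 0 = Ξ₀ 0 2 := congrFun (congrFun hsym 0) 2
  have h21 : Ξ₀ 2 1 = Ξ₀ 1 2 := congrFun (congrFun hsym 1) 2
  -- generic step: for any v in (0,1] and diagonal d with product 1,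
  -- the hypothesis gives a scalar inequality
  have step : ∀ dv : Fin 3 → ℝ, dv 0 * dv 1 * dv 2 = 1 →
      ((dv 0 * dv 0)^2 * (Ξ₀ 0 0)^2 + (dv 0 * dv 1)^2 * (Ξ₀ 0 1)^2
        + (dv 0 * dv 2)^2 * (Ξ₀ 0 2)^2
      + (dv 1 * dv 0)^2 * (Ξ₀ 1 0)^2 + (dv 1 * dv 1)^2 * (Ξ₀ 1 1)^2
        + (dv 1 * dv 2)^2 * (Ξ₀ 1 2)^2
      + (dv 2 * dv 0)^2 * (Ξ₀ 2 0)^2 + (dv 2 * dv 1)^2 * (Ξ₀ 2 1)^2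
        + (dv 2 * dv 2)^2 * (Ξ₀ 2 2)^2)
      - (1/3) * (dv 0 ^ 2 * Ξ₀ 0 0 + dv 1 ^ 2 * Ξ₀ 1 1 + dv 2 ^ 2 * Ξ₀ 2 2) ^ 2
      ≤ β * (dv 0 ^ 2 * Ξ₀ 0 0 + dv 1 ^ 2 * Ξ₀ 1 1 + dv 2 ^ 2 * Ξ₀ 2 2) := by
    intro dv hdv
    have hdet : (Matrix.diagonal dv).det = 1 := by
      rw [Matrix.det_diagonal, Fin.prod_univ_three]; exact hdv
    have := h (Matrix.diagonal dv) hdet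
    rwa [traceAtA, traceA] at this
  -- diagonal entries are zero
  have hz0 : Ξ₀ 0 0 = 0 := by
    apply aux_limit β _ (Ξ₀ 1 1) (Ξ₀ 2 2) (Ξ₀ 0 1) (Ξ₀ 0 2) (Ξ₀ 1 2)
    intro v hv hv1
    have hdv : (![v⁻¹, v, 1] : Fin 3 → ℝ) 0 * (![v⁻¹, v, 1] : Fin 3 → ℝ) 1
        * (![v⁻¹, v, 1] : Fin 3 → ℝ) 2 = 1 := by
      simp
      field_simp
    have hs := step ![v⁻¹, v, 1] hdv
    simp only [Matrix.cons_val_zero, Matrix.cons_val_one, Matrix.head_cons,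
      Matrix.cons_val_two, Matrix.tail_cons] at hs
    rw [h10, h20, h21] at hs
    have hv4 : (0:ℝ) < v^4 := by positivity
    have hiden : (Ξ₀ 0 0)^2 + (Ξ₀ 1 1)^2*v^8 + (Ξ₀ 2 2)^2*v^4 + 2*(Ξ₀ 0 1)^2*v^4
        + 2*(Ξ₀ 0 2)^2*v^2 + 2*(Ξ₀ 1 2)^2*v^6
        - (1/3)*(Ξ₀ 0 0 + Ξ₀ 1 1*v^4 + Ξ₀ 2 2*v^2)^2
        - β*(Ξ₀ 0 0*v^2 + Ξ₀ 1 1*v^6 + Ξ₀ 2 2*v^4)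
      = v^4 * ((((v⁻¹ * v⁻¹)^2 * (Ξ₀ 0 0)^2 + (v⁻¹ * v)^2 * (Ξ₀ 0 1)^2
          + (v⁻¹ * 1)^2 * (Ξ₀ 0 2)^2
        + (v * v⁻¹)^2 * (Ξ₀ 0 1)^2 + (v * v)^2 * (Ξ₀ 1 1)^2 + (v * 1)^2 * (Ξ₀ 1 2)^2
        + (1 * v⁻¹)^2 * (Ξ₀ 0 2)^2 + (1 * v)^2 * (Ξ₀ 1 2)^2 + (1 * 1)^2 * (Ξ₀ 2 2)^2)
        - (1/3) * (v⁻¹ ^ 2 * Ξ₀ 0 0 + v ^ 2 * Ξ₀ 1 1 + 1 ^ 2 * Ξ₀ 2 2) ^ 2)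
        - β * (v⁻¹ ^ 2 * Ξ₀ 0 0 + v ^ 2 * Ξ₀ 1 1 + 1 ^ 2 * Ξ₀ 2 2)) := by
      field_simp
      ring
    rw [hiden]
    exact mul_nonpos_of_nonneg_of_nonpos hv4.le (by linarith)
  have hz1 : Ξ₀ 1 1 = 0 := by
    apply aux_limit β _ (Ξ₀ 0 0) (Ξ₀ 2 2) (Ξ₀ 0 1) (Ξ₀ 1 2) (Ξ₀ 0 2)
    intro v hv hv1
    have hdv : (![v, v⁻¹, 1] : Fin 3 → ℝ) 0 * (![v, v⁻¹, 1] : Fin 3 → ℝ) 1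
        * (![v, v⁻¹, 1] : Fin 3 → ℝ) 2 = 1 := by
      simp
      field_simp
    have hs := step ![v, v⁻¹, 1] hdv
    simp only [Matrix.cons_val_zero, Matrix.cons_val_one, Matrix.head_cons,
      Matrix.cons_val_two, Matrix.tail_cons] at hs
    rw [h10, h20, h21] at hs
    have hv4 : (0:ℝ) < v^4 := by positivity
    have hiden : (Ξ₀ 1 1)^2 + (Ξ₀ 0 0)^2*v^8 + (Ξ₀ 2 2)^2*v^4 + 2*(Ξ₀ 0 1)^2*v^4
        + 2*(Ξ₀ 1 2)^2*v^2 + 2*(Ξ₀ 0 2)^2*v^6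
        - (1/3)*(Ξ₀ 1 1 + Ξ₀ 0 0*v^4 + Ξ₀ 2 2*v^2)^2
        - β*(Ξ₀ 1 1*v^2 + Ξ₀ 0 0*v^6 + Ξ₀ 2 2*v^4)
      = v^4 * ((((v * v)^2 * (Ξ₀ 0 0)^2 + (v * v⁻¹)^2 * (Ξ₀ 0 1)^2
          + (v * 1)^2 * (Ξ₀ 0 2)^2
        + (v⁻¹ * v)^2 * (Ξ₀ 0 1)^2 + (v⁻¹ * v⁻¹)^2 * (Ξ₀ 1 1)^2
          + (v⁻¹ * 1)^2 * (Ξ₀ 1 2)^2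
        + (1 * v)^2 * (Ξ₀ 0 2)^2 + (1 * v⁻¹)^2 * (Ξ₀ 1 2)^2 + (1 * 1)^2 * (Ξ₀ 2 2)^2)
        - (1/3) * (v ^ 2 * Ξ₀ 0 0 + v⁻¹ ^ 2 * Ξ₀ 1 1 + 1 ^ 2 * Ξ₀ 2 2) ^ 2)
        - β * (v ^ 2 * Ξ₀ 0 0 + v⁻¹ ^ 2 * Ξ₀ 1 1 + 1 ^ 2 * Ξ₀ 2 2)) := by
      field_simp
      ring
    rw [hiden]
    exact mul_nonpos_of_nonneg_of_nonpos hv4.le (by linarith)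
  have hz2 : Ξ₀ 2 2 = 0 := by
    apply aux_limit β _ (Ξ₀ 1 1) (Ξ₀ 0 0) (Ξ₀ 1 2) (Ξ₀ 0 2) (Ξ₀ 0 1)
    intro v hv hv1
    have hdv : (![1, v, v⁻¹] : Fin 3 → ℝ) 0 * (![1, v, v⁻¹] : Fin 3 → ℝ) 1
        * (![1, v, v⁻¹] : Fin 3 → ℝ) 2 = 1 := by
      simp
      field_simp
    have hs := step ![1, v, v⁻¹] hdv
    simp only [Matrix.cons_val_zero, Matrix.cons_val_one, Matrix.head_cons,
      Matrix.cons_val_two, Matrix.tail_cons] at hs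
    rw [h10, h20, h21] at hs
    have hv4 : (0:ℝ) < v^4 := by positivity
    have hiden : (Ξ₀ 2 2)^2 + (Ξ₀ 1 1)^2*v^8 + (Ξ₀ 0 0)^2*v^4 + 2*(Ξ₀ 1 2)^2*v^4
        + 2*(Ξ₀ 0 2)^2*v^2 + 2*(Ξ₀ 0 1)^2*v^6
        - (1/3)*(Ξ₀ 2 2 + Ξ₀ 1 1*v^4 + Ξ₀ 0 0*v^2)^2
        - β*(Ξ₀ 2 2*v^2 + Ξ₀ 1 1*v^6 + Ξ₀ 0 0*v^4)
      = v^4 * ((((1 * 1)^2 * (Ξ₀ 0 0)^2 + (1 * v)^2 * (Ξ₀ 0 1)^2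
          + (1 * v⁻¹)^2 * (Ξ₀ 0 2)^2
        + (v * 1)^2 * (Ξ₀ 0 1)^2 + (v * v)^2 * (Ξ₀ 1 1)^2 + (v * v⁻¹)^2 * (Ξ₀ 1 2)^2
        + (v⁻¹ * 1)^2 * (Ξ₀ 0 2)^2 + (v⁻¹ * v)^2 * (Ξ₀ 1 2)^2
          + (v⁻¹ * v⁻¹)^2 * (Ξ₀ 2 2)^2)
        - (1/3) * ((1:ℝ) ^ 2 * Ξ₀ 0 0 + v ^ 2 * Ξ₀ 1 1 + v⁻¹ ^ 2 * Ξ₀ 2 2) ^ 2)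
        - β * ((1:ℝ) ^ 2 * Ξ₀ 0 0 + v ^ 2 * Ξ₀ 1 1 + v⁻¹ ^ 2 * Ξ₀ 2 2)) := by
      field_simp
      ring
    rw [hiden]
    exact mul_nonpos_of_nonneg_of_nonpos hv4.le (by linarith)
  -- now the off-diagonal entries vanish using F = 1
  have h1 := step ![1, 1, 1] (by norm_num [Matrix.cons_val_two])
  simp only [Matrix.cons_val_zero, Matrix.cons_val_one, Matrix.head_cons,
    Matrix.cons_val_two, Matrix.tail_cons] at h1
  rw [h10, h20, h21, hz0, hz1, hz2] at h1
  have e01 : Ξ₀ 0 1 = 0 := by nlinarith [sq_nonneg (Ξ₀ 0 1), sq_nonneg (Ξ₀ 0 2), sq_nonneg (Ξ₀ 1 2)]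
  have e02 : Ξ₀ 0 2 = 0 := by nlinarith [sq_nonneg (Ξ₀ 0 1), sq_nonneg (Ξ₀ 0 2), sq_nonneg (Ξ₀ 1 2)]
  have e12 : Ξ₀ 1 2 = 0 := by nlinarith [sq_nonneg (Ξ₀ 0 1), sq_nonneg (Ξ₀ 0 2), sq_nonneg (Ξ₀ 1 2)]
  ext i j
  fin_cases i <;> fin_cases j <;>
    simp [hz0, hz1, hz2, e01, e02, e12, h10, h20, h21]
end

section
/- Let Ξ₀ ∈ Sym₃(ℝ), η_s > 0, μ > 0, λ₁ > 0. Suppose that for all F ∈ SL(3,ℝ) and all H ∈ T_F SL(3): 2η_s‖Sym(HF⁻¹)‖² + (μ/2)Ξ₀ : ((1/λ₁)FᵀF + 2FᵀSym(HF⁻¹)F) ≥ 0 (the Zaremba-Jaumann dissipation positivity, up to the factor convention). Then the quadratic-in-k condition obtained by taking Sym(HF⁻¹) = kμ(FΞ₀Fᵀ - (1/3)tr(FΞ₀Fᵀ)I) has nonpositive discriminant, yielding ‖FΞ₀Fᵀ‖² - (1/3)(tr(FΞ₀Fᵀ))² ≤ (4η_s/(μλ₁))tr(FΞ₀Fᵀ)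 for all F ∈ SL(3), and therefore Ξ₀ = 0. -/
open Matrix

/-- The symmetric part of a matrix. -/
noncomputable def symPart (M : Matrix (Fin 3) (Fin 3) ℝ) : Matrix (Fin 3) (Fin 3) ℝ :=
  ((1 : ℝ)/2) • (M + Mᵀ)

/-- Frobenius inner product. -/
noncomputable def frob (A B : Matrix (Fin 3) (Fin 3) ℝ) : ℝ := (Aᵀ * B).trace

lemma quartic_lead (L c3 c2 c1 c0 : ℝ)
    (h : ∀ t : ℝ, 1 ≤ t → L*t^4 + c3*t^3 + c2*t^2 + c1*t + c0 ≤ 0) : L ≤ 0 := by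
  by_contra hL
  push_neg at hL
  set K := |c3| + |c2| + |c1| + |c0| with hK
  have hK0 : 0 ≤ K := by positivity
  set t := max 1 ((K+1)/L) with ht
  have ht1 : (1:ℝ) ≤ t := le_max_left _ _
  have ht0 : (0:ℝ) < t := lt_of_lt_of_le one_pos ht1
  have htK : K + 1 ≤ L * t := by
    have h2 : (K+1)/L ≤ t := le_max_right _ _
    calc K + 1 = L * ((K+1)/L) := by field_simp
    _ ≤ L * t := by nlinarith
  have hi := h t ht1
  have e1 : t ≤ t^3 := by nlinarith [sq_nonneg (t-1), sq_nonneg t]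
  have e2 : t^2 ≤ t^3 := by nlinarith [sq_nonneg t]
  have e0 : 1 ≤ t^3 := by nlinarith
  have h3 : -|c3| * t^3 ≤ c3 * t^3 := by nlinarith [neg_abs_le c3, pow_pos ht0 3]
  have h2' : -|c2| * t^3 ≤ c2 * t^2 := by
    nlinarith [mul_nonneg (by linarith [neg_abs_le c2] : (0:ℝ) ≤ |c2| + c2) (sq_nonneg t),
      mul_nonneg (abs_nonneg c2) (by linarith : (0:ℝ) ≤ t^3 - t^2)]
  have h1' : -|c1| * t^3 ≤ c1 * t := by
    nlinarith [mul_nonneg (by linarith [neg_abs_le c1] : (0:ℝ) ≤ |c1| + c1) ht0.le,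
      mul_nonneg (abs_nonneg c1) (by linarith : (0:ℝ) ≤ t^3 - t)]
  have h0' : -|c0| * t^3 ≤ c0 := by
    nlinarith [(by linarith [neg_abs_le c0] : (0:ℝ) ≤ |c0| + c0),
      mul_nonneg (abs_nonneg c0) (by linarith : (0:ℝ) ≤ t^3 - 1)]
  have hfin : t^3 * (L * t - K) ≤ L * t^4 := by nlinarith
  nlinarith [pow_pos ht0 3, mul_pos (pow_pos ht0 3) (by linarith : (0:ℝ) < L*t - K)]

lemma entry_zero (a b c x y z C : ℝ)
    (h : ∀ p q r : ℝ, 0 < p → 0 < q → 0 < r → p*q*r = 1 →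
      p^4*a^2 + q^4*b^2 + r^4*c^2 + 2*p^2*q^2*x^2 + 2*p^2*r^2*y^2 + 2*q^2*r^2*z^2
        - (1/3)*(p^2*a + q^2*b + r^2*c)^2 ≤ C*(p^2*a + q^2*b + r^2*c)) : a = 0 := by
  have hq : ∀ t : ℝ, 1 ≤ t →
      (2*a^2)*t^4 + (6*y^2 - 2*a*c - 3*C*a)*t^3 + (2*c^2 + 6*x^2 - 2*a*b - 3*C*c)*t^2
        + (6*z^2 - 2*b*c - 3*C*b)*t + 2*b^2 ≤ 0 := by
    intro t ht
    have ht0 : (0:ℝ) < t := by linarith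
    set s := Real.sqrt t with hsdef
    have hs0 : 0 < s := Real.sqrt_pos.mpr ht0
    have hs2 : s^2 = t := Real.sq_sqrt ht0.le
    have hs1 : 1 ≤ s := by nlinarith [hs2]
    have hi := h s (1/s) 1 hs0 (by positivity) one_pos (by field_simp)
    have hsne : s ≠ 0 := ne_of_gt hs0
    field_simp at hi
    have hi8 := mul_le_mul_of_nonneg_right hi (pow_pos hs0 8).le
    rw [← hs2]
    have hX : ((2*a^2)*(s^2)^4 + (6*y^2 - 2*a*c - 3*C*a)*(s^2)^3
        + (2*c^2 + 6*x^2 - 2*a*b - 3*C*c)*(s^2)^2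
        + (6*z^2 - 2*b*c - 3*C*b)*(s^2) + 2*b^2) * s^8 ≤ 0 := by nlinarith [hi]
    nlinarith [hX, pow_pos hs0 8]
  have hL := quartic_lead _ _ _ _ _ hq
  nlinarith [sq_nonneg a]

set_option maxHeartbeats 1000000 in
theorem zaremba_jaumann_C0_trivial
    (Ξ₀ : Matrix (Fin 3) (Fin 3) ℝ) (hsym : Ξ₀ᵀ = Ξ₀)
    (ηs μ lam : ℝ) (hηs : 0 < ηs) (hμ : 0 < μ) (hlam : 0 < lam)
    (h : ∀ F : Matrix (Fin 3) (Fin 3) ℝ, F.det = 1 →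
      ∀ H : Matrix (Fin 3) (Fin 3) ℝ, (H * F⁻¹).trace = 0 →
        0 ≤ 2 * ηs * frob (symPart (H * F⁻¹)) (symPart (H * F⁻¹))
            + (μ / 2) * frob Ξ₀
                ((1 / lam) • (Fᵀ * F) + (2 : ℝ) • (Fᵀ * symPart (H * F⁻¹) * F))) :
    (∀ F : Matrix (Fin 3) (Fin 3) ℝ, F.det = 1 →
      frob (F * Ξ₀ * Fᵀ) (F * Ξ₀ * Fᵀ) - (1/3) * ((F * Ξ₀ * Fᵀ).trace) ^ 2
        ≤ (4 * ηs / (μ * lam)) * (F * Ξ₀ * Fᵀ).trace) ∧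
    Ξ₀ = 0 := by
  have key : ∀ F : Matrix (Fin 3) (Fin 3) ℝ, F.det = 1 →
      frob (F * Ξ₀ * Fᵀ) (F * Ξ₀ * Fᵀ) - (1/3) * ((F * Ξ₀ * Fᵀ).trace) ^ 2
        ≤ (4 * ηs / (μ * lam)) * (F * Ξ₀ * Fᵀ).trace := by
    intro F hF
    set A := F * Ξ₀ * Fᵀ with hA
    have hAsym : Aᵀ = A := by
      rw [hA, transpose_mul, transpose_mul, transpose_transpose, hsym, Matrix.mul_assoc]
    set T := A.trace with hT
    set D := A - ((1:ℝ)/3 * T) • (1 : Matrix (Fin 3) (Fin 3) ℝ) with hD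
    have hDsym : Dᵀ = D := by
      rw [hD, transpose_sub, hAsym, transpose_smul, transpose_one]
    have hDtr : D.trace = 0 := by
      rw [hD, trace_sub, trace_smul]
      simp [trace_one]
      ring
    set k : ℝ := -1/(4*ηs) with hk
    set c : ℝ := k * μ with hc
    set H := c • (D * F) with hH
    have hFu : IsUnit F.det := by rw [hF]; exact isUnit_one
    have hFinv : F * F⁻¹ = 1 := Matrix.mul_nonsing_inv F hFu
    have hHF : H * F⁻¹ = c • D := by
      rw [hH, Matrix.smul_mul, Matrix.mul_assoc, hFinv, Matrix.mul_one]
    have htr0 : (H * F⁻¹).trace = 0 := by rw [hHF, trace_smul, hDtr]; simp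
    have hsp : symPart (H * F⁻¹) = c • D := by
      rw [hHF, symPart, transpose_smul, hDsym]
      rw [← two_smul ℝ (c • D), smul_smul]
      norm_num
    have h0 := h F hF H htr0
    rw [hsp] at h0
    have hf1 : frob (c • D) (c • D) = c^2 * frob D D := by
      rw [frob, frob, transpose_smul, Matrix.smul_mul, Matrix.mul_smul, trace_smul, trace_smul]
      simp [smul_smul]; ring
    have hf2 : frob Ξ₀ (Fᵀ * F) = T := by
      rw [frob, hsym, hT, hA]
      rw [← Matrix.mul_assoc, Matrix.trace_mul_comm (Ξ₀ * Fᵀ) F, Matrix.mul_assoc]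
    have hf3 : frob Ξ₀ (Fᵀ * (c • D) * F) = c * frob D D := by
      rw [frob, hsym]
      simp only [Matrix.mul_smul, Matrix.smul_mul, trace_smul]
      congr 1
      have e1 : Ξ₀ * (Fᵀ * D * F) = (Ξ₀ * Fᵀ * D) * F := by
        simp only [Matrix.mul_assoc]
      rw [e1, Matrix.trace_mul_comm (Ξ₀ * Fᵀ * D) F]
      have e2 : F * (Ξ₀ * Fᵀ * D) = A * D := by
        rw [hA]; simp only [Matrix.mul_assoc]
      have e3 : A * D = D * D + ((1:ℝ)/3 * T) • D := by
        simp only [hD, Matrix.mul_sub, Matrix.sub_mul, Matrix.mul_smul, Matrix.smul_mul,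
          Matrix.mul_one, Matrix.one_mul, smul_sub, smul_smul]
        abel
      rw [e2, e3, trace_add, trace_smul, hDtr, frob, hDsym]
      simp
    have hlin : frob Ξ₀ ((1 / lam) • (Fᵀ * F) + (2 : ℝ) • (Fᵀ * (c • D) * F))
        = (1/lam) * T + 2 * (c * frob D D) := by
      rw [frob, Matrix.mul_add, trace_add, Matrix.mul_smul, Matrix.mul_smul, trace_smul, trace_smul]
      rw [← frob, ← frob, hf2, hf3]
      simp
    rw [hf1, hlin] at h0
    have hDD : frob D D = frob A A - (1/3) * T^2 := by
      rw [frob, frob, hDsym, hD, Matrix.mul_sub, Matrix.sub_mul, trace_sub, trace_sub]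
      have : Aᵀ * A = A * A := by rw [hAsym]
      simp [Matrix.smul_mul, Matrix.mul_smul, trace_smul, trace_one, this, ← hT]
      ring
    rw [hDD] at h0
    set N := frob A A - (1/3) * T^2 with hN
    rw [hc, hk] at h0
    rw [div_mul_eq_mul_div, le_div_iff₀ (by positivity)]
    have hE : 2 * ηs * ((-1/(4*ηs) * μ)^2 * N) + μ/2 * (1/lam * T + 2 * (-1/(4*ηs) * μ * N))
        = (μ * T)/(2*lam) - (μ^2 * N)/(8*ηs) := by
      field_simp
      ring
    rw [hE] at h0
    have h1 : (μ^2 * N) * (2*lam) ≤ (μ * T) * (8*ηs) := by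
      rw [sub_nonneg, div_le_div_iff₀ (by positivity) (by positivity)] at h0
      linarith
    nlinarith [h1, hμ, mul_pos hμ hlam]
  refine ⟨key, ?_⟩
  have h10 : Ξ₀ 1 0 = Ξ₀ 0 1 := by simpa using congrFun (congrFun hsym 0) 1
  have h20 : Ξ₀ 2 0 = Ξ₀ 0 2 := by simpa using congrFun (congrFun hsym 0) 2
  have h21 : Ξ₀ 2 1 = Ξ₀ 1 2 := by simpa using congrFun (congrFun hsym 1) 2
  set C : ℝ := 4 * ηs / (μ * lam) with hCdef
  set a := Ξ₀ 0 0
  set b := Ξ₀ 1 1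
  set c := Ξ₀ 2 2
  set x := Ξ₀ 0 1
  set y := Ξ₀ 0 2
  set z := Ξ₀ 1 2
  have hP : ∀ p q r : ℝ, 0 < p → 0 < q → 0 < r → p*q*r = 1 →
      p^4*a^2 + q^4*b^2 + r^4*c^2 + 2*p^2*q^2*x^2 + 2*p^2*r^2*y^2 + 2*q^2*r^2*z^2
        - (1/3)*(p^2*a + q^2*b + r^2*c)^2 ≤ C*(p^2*a + q^2*b + r^2*c) := by
    intro p q r hp hq hr hpqr
    set F : Matrix (Fin 3) (Fin 3) ℝ := diagonal ![p,q,r] with hFdef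
    have hdet : F.det = 1 := by
      rw [hFdef, Matrix.det_diagonal]
      rw [Fin.prod_univ_three]
      simpa using hpqr
    have hk := key F hdet
    have htr : (F * Ξ₀ * Fᵀ).trace = p^2*a + q^2*b + r^2*c := by
      rw [hFdef]
      simp [Matrix.trace_fin_three, Matrix.mul_apply, Fin.sum_univ_three, Matrix.diagonal]
      ring
    have hfr : frob (F * Ξ₀ * Fᵀ) (F * Ξ₀ * Fᵀ)
        = p^4*a^2 + q^4*b^2 + r^4*c^2 + 2*p^2*q^2*x^2 + 2*p^2*r^2*y^2 + 2*q^2*r^2*z^2 := by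
      rw [hFdef]
      simp [frob, Matrix.trace_fin_three, Matrix.mul_apply, Fin.sum_univ_three, Matrix.diagonal,
        h10, h20, h21]
      ring
    rw [htr, hfr] at hk
    exact hk
  have ha : a = 0 := entry_zero a b c x y z C hP
  have hb : b = 0 := by
    refine entry_zero b a c x z y C ?_
    intro p q r hp hq hr hpqr
    have := hP q p r hq hp hr (by rw [show q*p*r = p*q*r by ring]; exact hpqr)
    linarith [this]
  have hcc : c = 0 := by
    refine entry_zero c b a z y x C ?_
    intro p q r hp hq hr hpqr
    have := hP r q p hr hq hp (by rw [show r*q*p = p*q*r by ring]; exact hpqr)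
    linarith [this]
  have h111 := hP 1 1 1 one_pos one_pos one_pos (by ring)
  rw [ha, hb, hcc] at h111
  have hx2 : x = 0 := by nlinarith [h111, sq_nonneg x, sq_nonneg y, sq_nonneg z]
  have hy2 : y = 0 := by nlinarith [h111, sq_nonneg x, sq_nonneg y, sq_nonneg z]
  have hz2 : z = 0 := by nlinarith [h111, sq_nonneg x, sq_nonneg y, sq_nonneg z]
  ext i j
  simp only [Matrix.zero_apply]
  fin_cases i <;> fin_cases j
  · exact ha
  · exact hx2
  · exact hy2
  · exact h10.trans hx2
  · exact hb
  · exact hz2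
  · exact h20.trans hy2
  · exact h21.trans hz2
  · exact hcc
end

section
/- A first-order operator of the form σ ↦ σ̇ + Ob(σ, h), with Ob : Sym₃ × M₃ → Sym₃, is objective (i.e., transforms as σ* = QσQᵀ under superposed rigid motions x* = Q(t)x + a(t)) if and only if Ob(σ, h) = σw - wσ + Ob_s(σ, d), where d = Sym(h), w = Skew(h), and Ob_s : Sym₃ × Sym₃ → Sym₃ satisfies Ob_s(QσQᵀ, QdQᵀ) = Q Ob_s(σ, d) Qᵀ for all Q ∈ SO(3). -/
open Matrix

attribute [local instance] Matrix.normedAddCommGroup Matrix.normedSpace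

/-- The skew-symmetric part of a matrix. -/
noncomputable def skewPart (M : Matrix (Fin 3) (Fin 3) ℝ) : Matrix (Fin 3) (Fin 3) ℝ :=
  ((1 : ℝ)/2) • (M - Mᵀ)

/-- An operator `σ ↦ σ̇ + Ob (σ, h)` is objective if under every superposed rigid motion
`x* = Q(t)x + a(t)` (so that `σ* = QσQᵀ` and `h* = QhQᵀ + Q'Qᵀ`), the transformed rate
equals `Q (σ̇ + Ob (σ, h)) Qᵀ`.  The derivative of `σ* = QσQᵀ` is written out by the
product rule. -/
def Objective (Ob : Matrix (Fin 3) (Fin 3) ℝ → Matrix (Fin 3) (Fin 3) ℝ →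
    Matrix (Fin 3) (Fin 3) ℝ) : Prop :=
  ∀ (σ σ' Q Q' h : ℝ → Matrix (Fin 3) (Fin 3) ℝ),
    (∀ t, (σ t)ᵀ = σ t) →
    (∀ t, HasDerivAt σ (σ' t) t) →
    (∀ t, (Q t)ᵀ * Q t = 1 ∧ (Q t).det = 1) →
    (∀ t, HasDerivAt Q (Q' t) t) →
    ∀ t,
      (Q' t * σ t * (Q t)ᵀ + Q t * σ' t * (Q t)ᵀ + Q t * σ t * (Q' t)ᵀ)
          + Ob (Q t * σ t * (Q t)ᵀ) (Q t * h t * (Q t)ᵀ + Q' t * (Q t)ᵀ)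
        = Q t * (σ' t + Ob (σ t) (h t)) * (Q t)ᵀ

section Aux

abbrev M3 := Matrix (Fin 3) (Fin 3) ℝ

lemma hasDerivAt_matrix {f : ℝ → M3} {f' : M3} {t : ℝ} :
    HasDerivAt f f' t ↔ ∀ i j, HasDerivAt (fun s => f s i j) (f' i j) t := by
  exact hasDerivAt_pi.trans (forall_congr' fun i => hasDerivAt_pi)

lemma HasDerivAt.matmul {A B : ℝ → M3} {A' B' : M3} {t : ℝ}
    (hA : HasDerivAt A A' t) (hB : HasDerivAt B B' t) :
    HasDerivAt (fun s => A s * B s) (A' * B t + A t * B') t := by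
  rw [hasDerivAt_matrix] at *
  intro i j
  simp only [Matrix.mul_apply, Matrix.add_apply]
  rw [← Finset.sum_add_distrib]
  exact HasDerivAt.fun_sum fun k _ => ((hA i k).mul (hB k j))

lemma HasDerivAt.mtrans {A : ℝ → M3} {A' : M3} {t : ℝ}
    (hA : HasDerivAt A A' t) :
    HasDerivAt (fun s => (A s)ᵀ) A'ᵀ t := by
  rw [hasDerivAt_matrix] at *
  intro i j
  exact hA j i

open Real

noncomputable def Rx (θ : ℝ) : M3 := !![1,0,0; 0, cos θ, -sin θ; 0, sin θ, cos θ]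
noncomputable def Ry (θ : ℝ) : M3 := !![cos θ, 0, sin θ; 0,1,0; -sin θ, 0, cos θ]
noncomputable def Rz (θ : ℝ) : M3 := !![cos θ, -sin θ, 0; sin θ, cos θ, 0; 0,0,1]

lemma Rx_orth (θ : ℝ) : (Rx θ)ᵀ * Rx θ = 1 := by
  ext i j
  fin_cases i <;> fin_cases j <;>
    simp [Rx, Matrix.mul_apply, Fin.sum_univ_three, Matrix.one_apply, Matrix.vecHead,
      Matrix.vecTail] <;>
    nlinarith [sin_sq_add_cos_sq θ]

lemma Ry_orth (θ : ℝ) : (Ry θ)ᵀ * Ry θ = 1 := by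
  ext i j
  fin_cases i <;> fin_cases j <;>
    simp [Ry, Matrix.mul_apply, Fin.sum_univ_three, Matrix.one_apply, Matrix.vecHead,
      Matrix.vecTail] <;>
    nlinarith [sin_sq_add_cos_sq θ]

lemma Rz_orth (θ : ℝ) : (Rz θ)ᵀ * Rz θ = 1 := by
  ext i j
  fin_cases i <;> fin_cases j <;>
    simp [Rz, Matrix.mul_apply, Fin.sum_univ_three, Matrix.one_apply, Matrix.vecHead,
      Matrix.vecTail] <;>
    nlinarith [sin_sq_add_cos_sq θ]

lemma Rx_det (θ : ℝ) : (Rx θ).det = 1 := by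
  simp [Rx, Matrix.det_fin_three]; nlinarith [sin_sq_add_cos_sq θ]
lemma Ry_det (θ : ℝ) : (Ry θ).det = 1 := by
  simp [Ry, Matrix.det_fin_three]; nlinarith [sin_sq_add_cos_sq θ]
lemma Rz_det (θ : ℝ) : (Rz θ).det = 1 := by
  simp [Rz, Matrix.det_fin_three]; nlinarith [sin_sq_add_cos_sq θ]

lemma Rx_zero : Rx 0 = 1 := by
  ext i j; fin_cases i <;> fin_cases j <;>
    simp [Rx, Matrix.one_apply, Matrix.vecHead, Matrix.vecTail]
lemma Ry_zero : Ry 0 = 1 := by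
  ext i j; fin_cases i <;> fin_cases j <;>
    simp [Ry, Matrix.one_apply, Matrix.vecHead, Matrix.vecTail]
lemma Rz_zero : Rz 0 = 1 := by
  ext i j; fin_cases i <;> fin_cases j <;>
    simp [Rz, Matrix.one_apply, Matrix.vecHead, Matrix.vecTail]

noncomputable def Dx (a θ : ℝ) : M3 :=
  !![0,0,0; 0, -(a*sin θ), -(a*cos θ); 0, a*cos θ, -(a*sin θ)]
noncomputable def Dy (b θ : ℝ) : M3 :=
  !![-(b*sin θ), 0, b*cos θ; 0,0,0; -(b*cos θ), 0, -(b*sin θ)]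
noncomputable def Dz (c θ : ℝ) : M3 :=
  !![-(c*sin θ), -(c*cos θ), 0; c*cos θ, -(c*sin θ), 0; 0,0,0]

lemma hd_sin (a t : ℝ) : HasDerivAt (fun s => sin (a*s)) (a * cos (a*t)) t := by
  have h := (Real.hasDerivAt_sin (a*t)).comp t ((hasDerivAt_id t).const_mul a)
  exact h.congr_deriv (by simp [mul_comm])

lemma hd_cos (a t : ℝ) : HasDerivAt (fun s => cos (a*s)) (-(a * sin (a*t))) t := by
  have h := (Real.hasDerivAt_cos (a*t)).comp t ((hasDerivAt_id t).const_mul a)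
  exact h.congr_deriv (by simp [mul_comm])

lemma Rx_deriv (a t : ℝ) : HasDerivAt (fun s => Rx (a*s)) (Dx a (a*t)) t := by
  rw [hasDerivAt_matrix]
  intro i j
  fin_cases i <;> fin_cases j <;>
    simp [Rx, Dx, Matrix.vecHead, Matrix.vecTail] <;>
    first
      | exact hasDerivAt_const _ _
      | exact hd_sin a t
      | exact hd_cos a t
      | exact (hd_sin a t).neg
      | simpa using (hd_cos a t).neg

lemma Ry_deriv (b t : ℝ) : HasDerivAt (fun s => Ry (b*s)) (Dy b (b*t)) t := by
  rw [hasDerivAt_matrix]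
  intro i j
  fin_cases i <;> fin_cases j <;>
    simp [Ry, Dy, Matrix.vecHead, Matrix.vecTail] <;>
    first
      | exact hasDerivAt_const _ _
      | exact hd_sin b t
      | exact hd_cos b t
      | exact (hd_sin b t).neg
      | simpa using (hd_cos b t).neg

lemma Rz_deriv (c t : ℝ) : HasDerivAt (fun s => Rz (c*s)) (Dz c (c*t)) t := by
  rw [hasDerivAt_matrix]
  intro i j
  fin_cases i <;> fin_cases j <;>
    simp [Rz, Dz, Matrix.vecHead, Matrix.vecTail] <;>
    first
      | exact hasDerivAt_const _ _
      | exact hd_sin c t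
      | exact hd_cos c t
      | exact (hd_sin c t).neg
      | simpa using (hd_cos c t).neg

noncomputable def rotCurve (a b c t : ℝ) : M3 := Rz (c*t) * (Ry (b*t) * Rx (a*t))

noncomputable def rotCurve' (a b c t : ℝ) : M3 :=
  Dz c (c*t) * (Ry (b*t) * Rx (a*t)) +
    Rz (c*t) * (Dy b (b*t) * Rx (a*t) + Ry (b*t) * Dx a (a*t))

lemma orth_mul {A B : M3} (hA : Aᵀ * A = 1) (hB : Bᵀ * B = 1) : (A*B)ᵀ * (A*B) = 1 := by
  rw [Matrix.transpose_mul]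
  calc Bᵀ * Aᵀ * (A * B) = Bᵀ * (Aᵀ * A) * B := by noncomm_ring
    _ = 1 := by rw [hA, mul_one, hB]

lemma rotCurve_spec (a b c t : ℝ) :
    (rotCurve a b c t)ᵀ * rotCurve a b c t = 1 ∧ (rotCurve a b c t).det = 1 := by
  constructor
  · exact orth_mul (Rz_orth _) (orth_mul (Ry_orth _) (Rx_orth _))
  · simp [rotCurve, Matrix.det_mul, Rx_det, Ry_det, Rz_det]

lemma rotCurve_hasDeriv (a b c t : ℝ) :
    HasDerivAt (rotCurve a b c) (rotCurve' a b c t) t := by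
  unfold rotCurve rotCurve'
  exact (Rz_deriv c t).matmul ((Ry_deriv b t).matmul (Rx_deriv a t))

lemma rotCurve_zero (a b c : ℝ) : rotCurve a b c 0 = 1 := by
  simp [rotCurve, Rx_zero, Ry_zero, Rz_zero]

lemma rotCurve'_zero (a b c : ℝ) : rotCurve' a b c 0 = Dz c 0 + Dy b 0 + Dx a 0 := by
  simp [rotCurve', Rx_zero, Ry_zero, Rz_zero, add_assoc]

lemma skew_decomp (W : M3) (hW : Wᵀ = -W) :
    Dz (W 1 0) 0 + Dy (W 0 2) 0 + Dx (W 2 1) 0 = W := by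
  have key : ∀ i j, W j i = -(W i j) := fun i j => by
    have := congrFun (congrFun hW i) j
    simpa [Matrix.transpose_apply, Matrix.neg_apply] using this
  ext i j
  fin_cases i <;> fin_cases j <;>
    simp [Dx, Dy, Dz, Matrix.vecHead, Matrix.vecTail] <;>
    linarith [key 0 0, key 1 1, key 2 2, key 0 1, key 0 2, key 1 2,
      key 1 0, key 2 0, key 2 1]

lemma symPart_symm (h : M3) : (symPart h)ᵀ = symPart h := by
  simp [symPart, Matrix.transpose_add, Matrix.transpose_smul, add_comm]

lemma skewPart_skew (h : M3) : (skewPart h)ᵀ = -skewPart h := by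
  simp [skewPart, Matrix.transpose_sub, Matrix.transpose_smul]
  rw [← smul_neg, neg_sub]

lemma sym_add_skew (h : M3) : symPart h + skewPart h = h := by
  ext i j
  simp [symPart, skewPart, Matrix.add_apply, Matrix.sub_apply, Matrix.smul_apply,
    Matrix.transpose_apply]
  ring

lemma symPart_conj (P W h : M3) (hW : Wᵀ = -W) :
    symPart (P * h * Pᵀ + W) = P * symPart h * Pᵀ := by
  unfold symPart
  rw [Matrix.transpose_add, Matrix.transpose_mul, Matrix.transpose_mul,
    Matrix.transpose_transpose, hW]
  ext i j
  simp [Matrix.mul_apply, Matrix.add_apply, Matrix.smul_apply, Matrix.transpose_apply,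
    Fin.sum_univ_three, Matrix.neg_apply]
  ring

lemma skewPart_conj (P W h : M3) (hW : Wᵀ = -W) :
    skewPart (P * h * Pᵀ + W) = P * skewPart h * Pᵀ + W := by
  unfold skewPart
  rw [Matrix.transpose_add, Matrix.transpose_mul, Matrix.transpose_mul,
    Matrix.transpose_transpose, hW]
  ext i j
  simp [Matrix.mul_apply, Matrix.add_apply, Matrix.sub_apply, Matrix.smul_apply,
    Matrix.transpose_apply, Fin.sum_univ_three, Matrix.neg_apply]
  ring

section Forward

variable {Ob : M3 → M3 → M3}

/-- Equivariance under constant rotations. -/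
lemma obj_const (hOb : Objective Ob) (Q σ h : M3) (hσ : σᵀ = σ)
    (hQ : Qᵀ * Q = 1) (hd : Q.det = 1) :
    Ob (Q * σ * Qᵀ) (Q * h * Qᵀ) = Q * Ob σ h * Qᵀ := by
  have := hOb (fun _ => σ) (fun _ => 0) (fun _ => Q) (fun _ => 0)
    (fun _ => h) (fun _ => hσ) (fun _ => hasDerivAt_const _ _)
    (fun _ => ⟨hQ, hd⟩) (fun _ => hasDerivAt_const _ _) 0
  simpa using this

/-- Behaviour under instantaneous spins at the identity. -/
lemma obj_spin (hOb : Objective Ob) (W σ h : M3) (hσ : σᵀ = σ) (hW : Wᵀ = -W) :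
    Ob σ (h + W) = Ob σ h - W * σ + σ * W := by
  set a := W 2 1
  set b := W 0 2
  set c := W 1 0
  have := hOb (fun _ => σ) (fun _ => 0) (rotCurve a b c) (rotCurve' a b c)
    (fun _ => h) (fun _ => hσ) (fun _ => hasDerivAt_const _ _)
    (fun t => rotCurve_spec a b c t) (fun t => rotCurve_hasDeriv a b c t) 0
  rw [rotCurve_zero, rotCurve'_zero, skew_decomp W hW] at this
  simp only [Matrix.transpose_one, one_mul, mul_one, zero_add, mul_zero, zero_mul,
    add_zero, hW, Matrix.mul_neg] at this
  -- this : W * σ + (0 + σ * -W... ) rearrange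
  have h2 : Ob σ (h + W) = Ob σ h - (W * σ + -(σ * W)) := by
    rw [← this]; abel
  rw [h2]; abel

end Forward

end Aux

theorem objective_derivative_characterization
    (Ob : Matrix (Fin 3) (Fin 3) ℝ → Matrix (Fin 3) (Fin 3) ℝ →
      Matrix (Fin 3) (Fin 3) ℝ)
    (hObsym : ∀ σ h, σᵀ = σ → (Ob σ h)ᵀ = Ob σ h) :
    Objective Ob ↔
      ∃ Obs : Matrix (Fin 3) (Fin 3) ℝ → Matrix (Fin 3) (Fin 3) ℝ →
          Matrix (Fin 3) (Fin 3) ℝ,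
        (∀ σ d, σᵀ = σ → dᵀ = d → (Obs σ d)ᵀ = Obs σ d) ∧
        (∀ σ d Q, σᵀ = σ → dᵀ = d → Qᵀ * Q = 1 → Q.det = 1 →
          Obs (Q * σ * Qᵀ) (Q * d * Qᵀ) = Q * Obs σ d * Qᵀ) ∧
        (∀ σ h, σᵀ = σ →
          Ob σ h = σ * skewPart h - skewPart h * σ + Obs σ (symPart h)) := by
  constructor
  · intro hOb
    refine ⟨Ob, fun σ d hσ _ => hObsym σ d hσ,
      fun σ d Q hσ hd hQ hdet => obj_const hOb Q σ d hσ hQ hdet,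
      fun σ h hσ => ?_⟩
    have hspin := obj_spin hOb (skewPart h) σ (symPart h) hσ (skewPart_skew h)
    rw [sym_add_skew] at hspin
    rw [hspin]; abel
  · rintro ⟨Obs, hsym, heq, hdec⟩ σf σ'f Qf Q'f hf hσsym hσd hQ hQd t
    set P := Qf t with hPdef
    set P' := Q'f t with hP'def
    have hPtP : Pᵀ * P = 1 := (hQ t).1
    have hPPt : P * Pᵀ = 1 := mul_eq_one_comm.mp hPtP
    have h1 : HasDerivAt (fun s => (Qf s)ᵀ * Qf s) (P'ᵀ * P + Pᵀ * P') t :=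
      ((hQd t).mtrans).matmul (hQd t)
    have h2 : (fun s => (Qf s)ᵀ * Qf s) = fun _ => (1 : M3) :=
      funext fun s => (hQ s).1
    have h3 : HasDerivAt (fun s => (Qf s)ᵀ * Qf s) 0 t := by
      rw [h2]; exact hasDerivAt_const _ _
    have hz : P'ᵀ * P + Pᵀ * P' = 0 := h1.unique h3
    have e : P'ᵀ * P = -(Pᵀ * P') := eq_neg_of_add_eq_zero_left hz
    set W := P' * Pᵀ with hWdef
    have hW : Wᵀ = -W := by
      calc Wᵀ = P * P'ᵀ := by rw [hWdef, Matrix.transpose_mul, Matrix.transpose_transpose]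
        _ = P * P'ᵀ * (P * Pᵀ) := by rw [hPPt, mul_one]
        _ = P * (P'ᵀ * P) * Pᵀ := by noncomm_ring
        _ = P * (-(Pᵀ * P')) * Pᵀ := by rw [e]
        _ = -(P * Pᵀ * (P' * Pᵀ)) := by noncomm_ring
        _ = -W := by rw [hPPt, one_mul]
    have hP' : P' = W * P := by rw [hWdef, mul_assoc, hPtP, mul_one]
    have hP't : P'ᵀ = -(Pᵀ * W) := by
      rw [hP', Matrix.transpose_mul, hW, Matrix.mul_neg]
    have hs : (σf t)ᵀ = σf t := hσsym t
    have hconjs : (P * σf t * Pᵀ)ᵀ = P * σf t * Pᵀ := by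
      rw [Matrix.transpose_mul, Matrix.transpose_mul, Matrix.transpose_transpose, hs,
        mul_assoc]
    rw [hdec (P * σf t * Pᵀ) (P * hf t * Pᵀ + W) hconjs, hdec (σf t) (hf t) hs]
    rw [skewPart_conj P W (hf t) hW, symPart_conj P W (hf t) hW]
    rw [heq (σf t) (symPart (hf t)) P hs (symPart_symm _) hPtP (hQ t).2]
    rw [hP', Matrix.transpose_mul, hW]
    have e1 : ∀ X : M3, Pᵀ * (P * X) = X := fun X => by rw [← mul_assoc, hPtP, one_mul]
    have e2 : ∀ X : M3, P * (Pᵀ * X) = X := fun X => by rw [← mul_assoc, hPPt, one_mul]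
    simp only [mul_add, add_mul, mul_sub, sub_mul, mul_assoc, e1, e2, Matrix.mul_neg,
      Matrix.neg_mul, mul_one, one_mul]
    abel
end

section
/- Let F : ℝ → SL(3,ℝ), H = F', μ, λ₁, η_p > 0, and let Ξ solve Ξ' = -(1/λ₁)Ξ + (2η_p/(μλ₁)) F⁻¹Sym(HF⁻¹)F⁻ᵀ. Set σ_p = μFΞFᵀ, d = Sym(HF⁻¹). Then σ_p satisfies the Oldroyd B differential constitutive equation σ_p + λ₁(σ̇_p - hσ_p - σ_p hᵀ) = 2η_p d, where h = HF⁻¹. -/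
open Matrix

attribute [local instance] Matrix.normedAddCommGroup Matrix.normedSpace

lemma hasDerivAt_entry {f : ℝ → Matrix (Fin 3) (Fin 3) ℝ} {f' : Matrix (Fin 3) (Fin 3) ℝ} {t : ℝ}
    (hf : HasDerivAt f f' t) (i j : Fin 3) :
    HasDerivAt (fun s => f s i j) (f' i j) t :=
  hasDerivAt_pi.mp (hasDerivAt_pi.mp hf i) j

lemma hasDerivAt_of_entries {f : ℝ → Matrix (Fin 3) (Fin 3) ℝ} {f' : Matrix (Fin 3) (Fin 3) ℝ} {t : ℝ}
    (hf : ∀ i j, HasDerivAt (fun s => f s i j) (f' i j) t) :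
    HasDerivAt f f' t :=
  hasDerivAt_pi.mpr fun i => hasDerivAt_pi.mpr (hf i)

lemma hasDerivAt_matMul {f g : ℝ → Matrix (Fin 3) (Fin 3) ℝ}
    {f' g' : Matrix (Fin 3) (Fin 3) ℝ} {t : ℝ}
    (hf : HasDerivAt f f' t) (hg : HasDerivAt g g' t) :
    HasDerivAt (fun s => f s * g s) (f' * g t + f t * g') t := by
  apply hasDerivAt_of_entries
  intro i j
  have : ∀ s, (f s * g s) i j = ∑ k, f s i k * g s k j := fun s => Matrix.mul_apply
  simp only [this]
  have : HasDerivAt (fun s => ∑ k, f s i k * g s k j)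
      (∑ k, (f' i k * g t k j + f t i k * g' k j)) t := by
    apply HasDerivAt.fun_sum
    intro k _
    exact (hasDerivAt_entry hf i k).mul (hasDerivAt_entry hg k j)
  convert this using 1
  simp [Matrix.add_apply, Matrix.mul_apply, Finset.sum_add_distrib]

lemma hasDerivAt_transpose {f : ℝ → Matrix (Fin 3) (Fin 3) ℝ}
    {f' : Matrix (Fin 3) (Fin 3) ℝ} {t : ℝ} (hf : HasDerivAt f f' t) :
    HasDerivAt (fun s => (f s)ᵀ) f'ᵀ t := by
  apply hasDerivAt_of_entries
  intro i j
  exact hasDerivAt_entry hf j i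

theorem lagrangian_gives_oldroydB
    (μ lam ηp : ℝ) (hμ : 0 < μ) (hlam : 0 < lam) (hηp : 0 < ηp)
    (F H Ξ σp' : ℝ → Matrix (Fin 3) (Fin 3) ℝ)
    (hdet : ∀ t, (F t).det = 1)
    (hFderiv : ∀ t, HasDerivAt F (H t) t)
    (hΞderiv : ∀ t, HasDerivAt Ξ
      (-(1 / lam) • Ξ t +
        (2 * ηp / (μ * lam)) •
          ((F t)⁻¹ * symPart (H t * (F t)⁻¹) * ((F t)⁻¹)ᵀ)) t)
    (hσderiv : ∀ t, HasDerivAt (fun s => μ • (F s * Ξ s * (F s)ᵀ)) (σp' t) t) :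
    ∀ t,
      μ • (F t * Ξ t * (F t)ᵀ) +
        lam • (σp' t - (H t * (F t)⁻¹) * (μ • (F t * Ξ t * (F t)ᵀ))
          - (μ • (F t * Ξ t * (F t)ᵀ)) * (H t * (F t)⁻¹)ᵀ)
      = (2 * ηp) • symPart (H t * (F t)⁻¹) := by
  intro t
  have hinv : IsUnit (F t).det := by rw [hdet]; exact isUnit_one
  have hFi : F t * (F t)⁻¹ = 1 := Matrix.mul_nonsing_inv _ hinv
  have hiF : (F t)⁻¹ * F t = 1 := Matrix.nonsing_inv_mul _ hinv
  set Ξ' := -(1 / lam) • Ξ t +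
      (2 * ηp / (μ * lam)) •
        ((F t)⁻¹ * symPart (H t * (F t)⁻¹) * ((F t)⁻¹)ᵀ) with hΞ'
  -- derivative of σp computed by product rule
  have hcomp : HasDerivAt (fun s => μ • (F s * Ξ s * (F s)ᵀ))
      (μ • ((H t * Ξ t + F t * Ξ') * (F t)ᵀ + F t * Ξ t * (H t)ᵀ)) t := by
    have h1 := hasDerivAt_matMul (hFderiv t) (hΞderiv t)
    rw [← hΞ'] at h1
    have h2 := hasDerivAt_matMul h1 (hasDerivAt_transpose (hFderiv t))
    exact h2.const_smul μ
  have hσ : σp' t = μ • ((H t * Ξ t + F t * Ξ') * (F t)ᵀ + F t * Ξ t * (H t)ᵀ) :=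
    (hσderiv t).unique hcomp
  -- key simplification of F * Ξ' * Fᵀ
  have hkey : F t * Ξ' * (F t)ᵀ
      = -(1 / lam) • (F t * Ξ t * (F t)ᵀ) + (2 * ηp / (μ * lam)) • symPart (H t * (F t)⁻¹) := by
    rw [hΞ']
    have : (F t)⁻¹ᵀ * (F t)ᵀ = 1 := by rw [← Matrix.transpose_mul, hFi, Matrix.transpose_one]
    simp only [Matrix.mul_add, Matrix.add_mul, Matrix.mul_smul, Matrix.smul_mul]
    congr 1
    rw [← Matrix.mul_assoc (F t), ← Matrix.mul_assoc (F t), hFi, Matrix.one_mul,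
      Matrix.mul_assoc, this, Matrix.mul_one]
  have hh1 : (H t * (F t)⁻¹) * (μ • (F t * Ξ t * (F t)ᵀ)) = μ • (H t * Ξ t * (F t)ᵀ) := by
    rw [Matrix.mul_smul]
    congr 1
    rw [← Matrix.mul_assoc (H t * (F t)⁻¹) (F t * Ξ t) ((F t)ᵀ),
      ← Matrix.mul_assoc (H t * (F t)⁻¹) (F t) (Ξ t),
      Matrix.mul_assoc (H t) (F t)⁻¹ (F t), hiF, Matrix.mul_one]
  have hh2 : (μ • (F t * Ξ t * (F t)ᵀ)) * (H t * (F t)⁻¹)ᵀ = μ • (F t * Ξ t * (H t)ᵀ) := by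
    rw [Matrix.smul_mul]
    congr 1
    rw [Matrix.transpose_mul, Matrix.mul_assoc (F t * Ξ t) ((F t)ᵀ),
      ← Matrix.mul_assoc ((F t)ᵀ), ← Matrix.transpose_mul, hiF, Matrix.transpose_one,
      Matrix.one_mul]
  rw [hσ, hh1, hh2]
  have hmain : μ • ((H t * Ξ t + F t * Ξ') * (F t)ᵀ + F t * Ξ t * (H t)ᵀ)
      - μ • (H t * Ξ t * (F t)ᵀ) - μ • (F t * Ξ t * (H t)ᵀ) = μ • (F t * Ξ' * (F t)ᵀ) := by
    simp only [Matrix.add_mul]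
    module
  rw [sub_sub, ← sub_sub, hmain, hkey]
  have hμ' : μ ≠ 0 := ne_of_gt hμ
  have hlam' : lam ≠ 0 := ne_of_gt hlam
  match_scalars <;> field_simp <;> ring
end
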